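/- arXiv:2504.00956 — 9 statements merged into one kernel-verified Lean document; each statement's English description precedes it below -/
import Mathlib

section
/- Let G be an abelian group and let H act on bi-infinite sequences h : ℤ → G by (H·h)_k = h_{k-1} + h_{-1} for k ≠ 1 and (H·h)_1 = -h_{-1}. Then for every n ∈ ℕ, setting c_n = Σ_{j=1}^n 2^{n-j} h_{-j}, one has (H^n·h)_k = h_{k-n} + c_n whenever k > n or k ≤ -1, and (H^n·h)_k = -3 Σ_{j=1}^{n-k} 2^{n-k-j} h_{-j} - 2 h_{-n+k-1} + c_n whenever 1 ≤ k ≤ n. -/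
/-- The operator `H` acting on bi-infinite `G`-valued sequences:
`(H·h)_k = h_{k-1} + h_{-1}` for `k ≠ 1` and `(H·h)_1 = -h_{-1}`. -/
def Hop {G : Type*} [AddCommGroup G] (f : ℤ → G) : ℤ → G :=
  fun k => if k = 1 then -f (-1) else f (k - 1) + f (-1)

lemma csucc {G : Type*} [AddCommGroup G] (h : ℤ → G) (n : ℕ) :
    (∑ j ∈ Finset.Icc 1 (n+1), 2 ^ (n + 1 - j) • h (-(j : ℤ)))
      = 2 • (∑ j ∈ Finset.Icc 1 n, 2 ^ (n - j) • h (-(j : ℤ))) + h (-(n+1) : ℤ) := by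
  rw [Finset.sum_Icc_succ_top (by omega : 1 ≤ n + 1)]
  simp only [Nat.sub_self, pow_zero, one_smul]
  congr 1
  rw [Finset.smul_sum]
  refine Finset.sum_congr rfl fun j hj => ?_
  rw [Finset.mem_Icc] at hj
  rw [show n + 1 - j = (n - j) + 1 by omega, pow_succ, mul_comm, mul_smul]

theorem stmt0 {G : Type*} [AddCommGroup G] (h : ℤ → G) (n : ℕ)
    (c : G) (hc : c = ∑ j ∈ Finset.Icc 1 n, 2 ^ (n - j) • h (-(j : ℤ))) :
    (∀ k : ℤ, ((n : ℤ) < k ∨ k ≤ -1) → Hop^[n] h k = h (k - n) + c) ∧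
    (∀ k : ℕ, 1 ≤ k → k ≤ n →
      Hop^[n] h k =
        -(3 • ∑ j ∈ Finset.Icc 1 (n - k), 2 ^ (n - k - j) • h (-(j : ℤ)))
          - 2 • h (-(n : ℤ) + k - 1) + c) := by
  subst hc
  induction n with
  | zero =>
    constructor
    · intro k _; simp
    · intro k hk1 hk2; omega
  | succ n ih =>
    obtain ⟨ih1, ih2⟩ := ih
    constructor
    · intro k hk
      rw [Function.iterate_succ_apply', Hop,
        if_neg (show k ≠ 1 by push_cast at hk; omega)]
      rw [ih1 (k - 1) (by push_cast at hk ⊢; omega), ih1 (-1) (Or.inr le_rfl),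
        csucc]
      push_cast
      rw [show k - 1 - (n:ℤ) = k - ((n:ℤ) + 1) by ring,
        show (-1 - (n:ℤ)) = -((n:ℤ) + 1) by ring]
      generalize (∑ j ∈ Finset.Icc 1 n, 2 ^ (n - j) • h (-(j : ℤ))) = S
      abel
    · intro k hk1 hk2
      rw [Function.iterate_succ_apply']
      rcases eq_or_lt_of_le hk1 with hk | hk
      · subst hk
        rw [show ((1:ℕ):ℤ) = 1 from rfl, Hop, if_pos rfl,
          ih1 (-1) (Or.inr le_rfl), csucc]
        simp only [Nat.add_sub_cancel]
        push_cast
        rw [show (-((n:ℤ) + 1) + 1 - 1) = -1 - (n:ℤ) by ring]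
        generalize (∑ j ∈ Finset.Icc 1 n, 2 ^ (n - j) • h (-(j : ℤ))) = S
        abel
      · have h2 : 2 ≤ k := hk
        rw [Hop, if_neg (show (k:ℤ) ≠ 1 by exact_mod_cast by omega)]
        rw [ih1 (-1) (Or.inr le_rfl)]
        rw [show ((k:ℤ) - 1) = ((k-1:ℕ):ℤ) by omega,
          ih2 (k-1) (by omega) (by omega), csucc]
        rw [show n - (k - 1) = n + 1 - k by omega]
        push_cast [show 1 ≤ k from hk1]
        rw [show (-(n:ℤ) + ((k:ℤ) - 1) - 1) = -((n:ℤ) + 1) + k - 1 by ring,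
          show (-1 - (n:ℤ)) = -((n:ℤ) + 1) by ring]
        generalize (∑ j ∈ Finset.Icc 1 n, 2 ^ (n - j) • h (-(j : ℤ))) = S
        generalize (∑ j ∈ Finset.Icc 1 (n + 1 - k), 2 ^ (n + 1 - k - j) • h (-(j : ℤ))) = T
        abel
end

section
/- Let h : ℤ → ℤ/2ℤ with h_0 = 0, and define the operator H on such sequences by (H·h)_k = h_{k-1} + h_{-1} for k ≠ 1 and (H·h)_1 = -h_{-1}. For n ∈ ℕ, h is a fixed point of H^n if and only if h is weakly n-periodic, i.e., h_{k+n} - h_k = h_n for all k ∈ ℤ. -/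
lemma Hop_apply (h : ℤ → ZMod 2) (h0 : h 0 = 0) (k : ℤ) :
    Hop h k = h (k - 1) + h (-1) := by
  unfold Hop
  split_ifs with hk
  · subst hk; simp [h0, CharTwo.neg_eq]
  · rfl

lemma Hop_iter (h : ℤ → ZMod 2) (h0 : h 0 = 0) (n : ℕ) (k : ℤ) :
    Hop^[n] h k = h (k - n) + h (-n) := by
  induction n generalizing k with
  | zero => simp [h0]
  | succ n ih =>
    rw [Function.iterate_succ_apply']
    have g0 : Hop^[n] h 0 = 0 := by rw [ih]; simp [CharTwo.add_self_eq_zero]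
    rw [Hop_apply _ g0, ih, ih]
    rw [show k - 1 - (n : ℤ) = k - (n + 1 : ℕ) by push_cast; ring,
      show (-1 : ℤ) - (n : ℤ) = -((n + 1 : ℕ) : ℤ) by push_cast; ring]
    linear_combination CharTwo.add_self_eq_zero (h (-(n:ℤ)))

theorem stmt1 (h : ℤ → ZMod 2) (h0 : h 0 = 0) (n : ℕ) :
    Hop^[n] h = h ↔ ∀ k : ℤ, h (k + n) - h k = h n := by
  constructor
  · intro hfix k
    have key : ∀ m : ℤ, h (m - n) + h (-n) = h m := fun m => by
      conv_rhs => rw [← hfix]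
      rw [Hop_iter h h0]
    have hn : h (-(n:ℤ)) = h n := by simpa [h0] using key (n:ℤ)
    have := key (k + n)
    simp only [add_sub_cancel_right] at this
    rw [CharTwo.sub_eq_add, ← this, hn]
    linear_combination CharTwo.add_self_eq_zero (h k)
  · intro hper
    funext k
    rw [Hop_iter h h0]
    have hn : h (-(n:ℤ)) = h n := by
      simpa [h0, CharTwo.neg_eq] using hper (-(n:ℤ))
    have := hper (k - n)
    rw [sub_add_cancel, CharTwo.sub_eq_add] at this
    rw [hn]
    linear_combination CharTwo.add_self_eq_zero (h (n:ℤ)) - CharTwo.add_self_eq_zero (h k) + this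
end

section
/- Let d, n ∈ ℕ with d ≥ 1, and let G be an abelian group in which every element has order dividing d (e.g. |G| = d). Let h : ℤ → G with h_0 = 0 be a fixed point of H^n, where (H·h)_k = h_{k-1} + h_{-1} for k ≠ 1 and (H·h)_1 = -h_{-1}. Then h is dn-periodic forwards and backwards: h_{k+dn} = h_k and h_{-k-dn} = h_{-k} for all k ≥ 1. -/
/-- auxiliary: c_m = Σ_{j=1}^m 2^{m-j} h_{-j}, recursively. -/
def cseq {G : Type*} [AddCommGroup G] (h : ℤ → G) : ℕ → G
  | 0 => 0
  | (m+1) => 2 • cseq h m + h (-((m:ℤ)+1))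

lemma iter_formula {G : Type*} [AddCommGroup G] (h : ℤ → G) :
    ∀ m : ℕ, ∀ k : ℤ, ((m:ℤ)+1 ≤ k ∨ k ≤ 0) →
      Hop^[m] h k = h (k - m) + cseq h m := by
  intro m
  induction m with
  | zero => intro k _; simp [cseq]
  | succ m ih =>
    intro k hk
    have hk1 : k ≠ 1 := by
      rcases hk with hk | hk <;> push_cast at hk <;> omega
    rw [Function.iterate_succ_apply']
    have e1 : Hop (Hop^[m] h) k = Hop^[m] h (k-1) + Hop^[m] h (-1) := by
      simp [Hop, hk1]
    rw [e1, ih (k-1) (by rcases hk with hk | hk <;> [left; right] <;> push_cast at * <;> omega),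
      ih (-1) (Or.inr (by norm_num))]
    show _ = h (k - (↑m + 1)) + (2 • cseq h m + h (-((m:ℤ)+1)))
    have : (-1 : ℤ) - m = -((m:ℤ)+1) := by ring
    rw [this]
    have : k - 1 - m = k - ((m:ℤ)+1) := by ring
    rw [this]
    abel

theorem stmt3 {G : Type*} [AddCommGroup G] (d n : ℕ) (hd1 : 1 ≤ d)
    (hexp : ∀ g : G, d • g = 0) (h : ℤ → G) (h0 : h 0 = 0)
    (hfix : Hop^[n] h = h) :
    ∀ k : ℤ, 1 ≤ k →
      h (k + ((d * n : ℕ) : ℤ)) = h k ∧ h (-k - ((d * n : ℕ) : ℤ)) = h (-k) := by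
  -- step B: h (k - n) = h k - c n for k ≤ 0
  have B : ∀ k : ℤ, k ≤ 0 → h (k - n) = h k - cseq h n := by
    intro k hk
    have := iter_formula h n k (Or.inr hk)
    rw [hfix] at this
    rw [this]; abel
  -- step B': iterated
  have B' : ∀ s : ℕ, ∀ k : ℤ, k ≤ 0 → h (k - s * n) = h k - s • cseq h n := by
    intro s
    induction s with
    | zero => intro k _; simp
    | succ s ih =>
      intro k hk
      have e : k - ((s:ℤ)+1) * n = (k - s * n) - n := by ring
      push_cast
      rw [e, B _ (by have : (0:ℤ) ≤ (s*n : ℕ) := Int.natCast_nonneg _; push_cast at this ⊢; omega),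
        ih k hk, succ_nsmul]
      abel
  -- step C: c (s*n) = s • c n
  have C : ∀ s : ℕ, cseq h (s * n) = s • cseq h n := by
    intro s
    induction s with
    | zero => simp [cseq]
    | succ s ih =>
      have T : ∀ q : ℕ, cseq h (s * n + q) = cseq h q + s • cseq h n := by
        intro q
        induction q with
        | zero => rw [Nat.add_zero, ih]; simp [cseq]
        | succ q ihq =>
          show 2 • cseq h (s*n+q) + h (-(((s*n+q:ℕ):ℤ)+1)) = _
          have e : (-(((q:ℕ):ℤ)+1)) - s * n = -(((s*n+q:ℕ):ℤ)+1) := by push_cast; ring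
          rw [ihq, ← e, B' s _ (by push_cast; omega)]
          show _ = 2 • cseq h q + h (-((q:ℤ)+1)) + s • cseq h n
          rw [two_nsmul, two_nsmul]
          abel
      have := T n
      rw [show s * n + n = (s+1)*n by ring] at this
      rw [this, succ_nsmul]
      abel
  have hcdn : cseq h (d * n) = 0 := by rw [C d, hexp]
  have hfixdn : Hop^[d * n] h = h := by
    rw [mul_comm, Function.iterate_mul]
    exact Function.iterate_fixed hfix d
  intro k hk
  constructor
  · have := iter_formula h (d*n) (k + (d*n : ℕ)) (Or.inl (by push_cast; omega))
    rw [hfixdn, hcdn] at this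
    simpa using this
  · have := iter_formula h (d*n) (-k) (Or.inr (by omega))
    rw [hfixdn, hcdn] at this
    rw [this, add_zero]
end

section
/- Let G be a finite abelian group of order d and n ∈ ℕ. If h : ℤ → G with h_0 = 0 is a fixed point of H^n (where (H·h)_k = h_{k-1} + h_{-1} for k ≠ 1 and (H·h)_1 = -h_{-1}), then the period sum vanishes: Σ_{j=1}^{dn} (−h_j + h_{−j}) = 0. -/
lemma hop_iter {G : Type*} [AddCommGroup G] (f : ℤ → G) :
    ∀ (n : ℕ) (k : ℤ), (k ≤ 0 ∨ (n : ℤ) < k) →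
      (Hop^[n] f) k = f (k - n) + ∑ j ∈ Finset.range n, (Hop^[j] f) (-1) := by
  intro n
  induction n with
  | zero => intro k _; simp
  | succ n ih =>
    intro k hk
    have hk1 : k ≠ 1 := by omega
    rw [Function.iterate_succ_apply', Hop]
    simp only [if_neg hk1]
    rw [ih (k - 1) (by omega), Finset.sum_range_succ]
    have : k - 1 - (n : ℤ) = k - ((n : ℕ) + 1 : ℕ) := by push_cast; ring
    rw [this]
    abel

theorem stmt4 {G : Type*} [AddCommGroup G] [Fintype G] (d n : ℕ)
    (hd : Fintype.card G = d) (h : ℤ → G) (h0 : h 0 = 0)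
    (hfix : Hop^[n] h = h) :
    ∑ j ∈ Finset.Icc 1 (d * n), (-h (j : ℤ) + h (-(j : ℤ))) = 0 := by
  set S : G := ∑ j ∈ Finset.range n, (Hop^[j] h) (-1) with hS
  have key : ∀ k : ℤ, (k ≤ 0 ∨ (n : ℤ) < k) → h k = h (k - n) + S := by
    intro k hk
    conv_lhs => rw [← hfix]
    exact hop_iter h n k hk
  have pos : ∀ (j : ℕ), 1 ≤ j → ∀ m : ℕ, h ((j : ℤ) + m * n) = h j + m • S := by
    intro j hj m
    induction m with
    | zero => simp
    | succ m ih =>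
      have hmn : (0 : ℤ) ≤ (m : ℤ) * n := by positivity
      have hgt : (n : ℤ) < (j : ℤ) + ((m + 1 : ℕ) : ℤ) * n := by push_cast; nlinarith
      rw [key _ (Or.inr hgt)]
      have e : (j : ℤ) + ((m + 1 : ℕ) : ℤ) * n - n = (j : ℤ) + m * n := by push_cast; ring
      rw [e, ih, succ_nsmul]
      abel
  have neg : ∀ (j m : ℕ), h (-((j : ℤ) + m * n)) = h (-(j : ℤ)) - m • S := by
    intro j m
    induction m with
    | zero => simp
    | succ m ih =>
      have hle : (-((j : ℤ) + m * n)) ≤ 0 := by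
        have : (0 : ℤ) ≤ (j : ℤ) + m * n := by positivity
        omega
      have h2 : h (-((j : ℤ) + m * n) - n) = h (-((j : ℤ) + m * n)) - S :=
        eq_sub_of_add_eq (key _ (Or.inl hle)).symm
      have e : -((j : ℤ) + ((m + 1 : ℕ) : ℤ) * n) = -((j : ℤ) + m * n) - n := by
        push_cast; ring
      rw [e, h2, ih, succ_nsmul]
      abel
  set B : G := ∑ j ∈ Finset.Ioc 0 n, (-h (j : ℤ) + h (-(j : ℤ))) with hB
  have block : ∀ q : ℕ, ∑ j ∈ Finset.Ioc (q * n) ((q + 1) * n), (-h (j : ℤ) + h (-(j : ℤ)))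
      = B - (2 * q * n) • S := by
    intro q
    have hmap : (Finset.Ioc 0 n).map (addRightEmbedding (q * n)) =
        Finset.Ioc (q * n) ((q + 1) * n) := by
      rw [Finset.map_add_right_Ioc]
      congr 1 <;> ring
    rw [← hmap, Finset.sum_map]
    have step : ∀ j ∈ Finset.Ioc 0 n,
        (-h ((addRightEmbedding (q * n) j : ℕ) : ℤ) +
          h (-((addRightEmbedding (q * n) j : ℕ) : ℤ)))
        = (-h (j : ℤ) + h (-(j : ℤ))) - (2 * q) • S := by
      intro j hj
      have hj1 : 1 ≤ j := (Finset.mem_Ioc.mp hj).1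
      have e : ((addRightEmbedding (q * n) j : ℕ) : ℤ) = (j : ℤ) + q * n := by
        simp [addRightEmbedding]
      rw [e, pos j hj1 q, neg j q]
      rw [show (2 * q) • S = q • S + q • S by rw [two_mul, add_nsmul]]
      abel
    rw [Finset.sum_congr rfl step, Finset.sum_sub_distrib, Finset.sum_const,
      Nat.card_Ioc, Nat.sub_zero, ← hB, smul_smul]
    congr 2
    ring
  have main : ∀ q : ℕ, ∑ j ∈ Finset.Ioc 0 (q * n), (-h (j : ℤ) + h (-(j : ℤ)))
      = q • B - ((q : ℤ) * ((q : ℤ) - 1) * n) • S := by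
    intro q
    induction q with
    | zero => simp
    | succ q ih =>
      rw [← Finset.sum_Ioc_consecutive _ (Nat.zero_le (q * n))
        (Nat.mul_le_mul_right n (Nat.le_succ q)), ih, block q, succ_nsmul,
        ← natCast_zsmul S (2 * q * n)]
      have ec : (((q + 1 : ℕ) : ℤ)) * (((q + 1 : ℕ) : ℤ) - 1) * n
          = (q : ℤ) * ((q : ℤ) - 1) * n + ((2 * q * n : ℕ) : ℤ) := by push_cast; ring
      rw [ec, add_zsmul]
      abel
  rw [show Finset.Icc 1 (d * n) = Finset.Ioc 0 (d * n) from Finset.Icc_add_one_left_eq_Ioc 0 (d * n),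
    main d]
  have hdB : d • B = 0 := hd ▸ card_nsmul_eq_zero
  have hdS : ((d : ℤ) * ((d : ℤ) - 1) * n) • S = 0 := by
    have e : ((d : ℤ) * ((d : ℤ) - 1) * n) • S = (((d : ℤ) - 1) * n) • ((d : ℤ) • S) := by
      rw [← mul_smul]; ring_nf
    have hcard : ∀ x : G, d • x = 0 := fun x => hd ▸ card_nsmul_eq_zero
    rw [e]
    simp [natCast_zsmul, hcard]
  rw [hdB, hdS, sub_zero]
end

section
/- Let G be a finite abelian group of order d and n ∈ ℕ. Define C_n ⊆ {h : ℤ → G | h_0 = 0} as the set of sequences that are dn-periodic backwards and forwards (h_{k+dn} = h_k and h_{-k-dn} = h_{-k} for k ≥ 1), have vanishing period sum Σ_{j=1}^{dn}(−h_j + h_{−j}) = 0, satisfy 2h_{dn-k+1} - h_{dn-k} = 2h_{-k-1} - h_{-k} for all 1 ≤ k ≤ dn-1, and satisfy h_{dn} = -2h_{-1}, h_{-dn} = -2h_1. Then the operator P_1, defined by (P_1·h)_k = h_{-k} + 2Σ_{j=1}^{k-1}(−h_j + h_{−j}) for k ≥ 1 and (P_1·h)_k = h_{-k} + 2Σ_{j=1}^{-k}(−h_j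 + h_{−j}) for k ≤ -1, maps C_n to C_n. -/
/-- Membership in the set `C_n` of defining vectors (for deck group of order `d`):
`h_0 = 0`, the entries generate `G`, `h` is `dn`-periodic forwards and backwards,
the period sum vanishes, and the forper–backper relations hold at places
`1, …, dn-1` as well as at places `0` and `dn`. -/
def InC {G : Type*} [AddCommGroup G] (d n : ℕ) (h : ℤ → G) : Prop :=
  h 0 = 0 ∧
  AddSubgroup.closure (Set.range h) = ⊤ ∧
  (∀ k : ℤ, 1 ≤ k →
    h (k + ((d * n : ℕ) : ℤ)) = h k ∧ h (-k - ((d * n : ℕ) : ℤ)) = h (-k)) ∧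
  (∑ j ∈ Finset.Icc 1 (d * n), (-h (j : ℤ) + h (-(j : ℤ)))) = 0 ∧
  (∀ k : ℕ, 1 ≤ k → k < d * n →
    2 • h (((d * n : ℕ) : ℤ) - k + 1) - h (((d * n : ℕ) : ℤ) - k)
      = 2 • h (-(k : ℤ) - 1) - h (-(k : ℤ))) ∧
  h ((d * n : ℕ) : ℤ) = -(2 • h (-1)) ∧
  h (-((d * n : ℕ) : ℤ)) = -(2 • h 1)

/-- The action of the parabolic generator `P₁` on defining vectors. -/
noncomputable def P1act {G : Type*} [AddCommGroup G] (h : ℤ → G) : ℤ → G := fun k =>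
  if k = 0 then 0
  else if 1 ≤ k then h (-k) + 2 • ∑ j ∈ Finset.Icc 1 (k - 1), (-h j + h (-j))
  else h (-k) + 2 • ∑ j ∈ Finset.Icc 1 (-k), (-h j + h (-j))

namespace Stmt6Aux

variable {G : Type*} [AddCommGroup G]

/-- Partial period sums. -/
noncomputable def Tz (h : ℤ → G) : ℤ → G := fun m => ∑ j ∈ Finset.Icc (1:ℤ) m, (-h j + h (-j))

lemma Tz_nonpos (h : ℤ → G) {m : ℤ} (hm : m ≤ 0) : Tz h m = 0 := by
  unfold Tz
  rw [Finset.Icc_eq_empty (by omega), Finset.sum_empty]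

lemma Tz_succ (h : ℤ → G) {m : ℤ} (hm : 0 ≤ m) :
    Tz h (m + 1) = Tz h m + (-h (m + 1) + h (-(m + 1))) := by
  unfold Tz
  have hins : Finset.Icc (1:ℤ) (m+1) = insert (m+1) (Finset.Icc 1 m) := by
    ext x; simp only [Finset.mem_Icc, Finset.mem_insert]; omega
  rw [hins, Finset.sum_insert (by simp)]
  abel

lemma Tz_cast (h : ℤ → G) (m : ℕ) :
    Tz h (m : ℤ) = ∑ j ∈ Finset.Icc 1 m, (-h (j : ℤ) + h (-(j : ℤ))) := by
  induction m with
  | zero => simp [Tz_nonpos h le_rfl]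
  | succ m ih =>
      rw [Finset.sum_Icc_succ_top (by omega : 1 ≤ m + 1)]
      push_cast
      rw [Tz_succ h (by positivity), ih]

lemma Tz_one (h : ℤ → G) : Tz h 1 = -h 1 + h (-1) := by
  have e := Tz_succ h (le_refl (0:ℤ))
  rw [show (0:ℤ) + 1 = 1 by norm_num] at e
  rw [Tz_nonpos h le_rfl, zero_add] at e
  exact e

lemma gpos (h : ℤ → G) {k : ℤ} (hk : 1 ≤ k) :
    P1act h k = h (-k) + 2 • Tz h (k - 1) := by
  simp only [P1act, Tz]
  rw [if_neg (by omega : ¬ k = 0), if_pos hk]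

lemma gneg (h : ℤ → G) {k : ℤ} (hk : 1 ≤ k) :
    P1act h (-k) = h k + 2 • Tz h k := by
  simp only [P1act, Tz]
  rw [if_neg (by omega : ¬ (-k) = 0), if_neg (by omega : ¬ (1:ℤ) ≤ -k), neg_neg]

end Stmt6Aux

open Stmt6Aux in
theorem stmt6 {G : Type*} [AddCommGroup G] [Fintype G] (d n : ℕ)
    (hd : Fintype.card G = d) (h : ℤ → G) (hC : InC d n h) :
    InC d n (P1act h) := by
  obtain ⟨h0, hcl, hper, hsum, hA, hhN, hhN'⟩ := hC
  have hT0 : Tz h ((d * n : ℕ) : ℤ) = 0 := by rw [Tz_cast]; exact hsum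
  -- integer version of the forper relations
  have hA' : ∀ k : ℤ, 1 ≤ k → k < ((d * n : ℕ) : ℤ) →
      2 • h (((d * n : ℕ) : ℤ) - k + 1) - h (((d * n : ℕ) : ℤ) - k)
        = 2 • h (-k - 1) - h (-k) := by
    intro k hk1 hk2
    have h2 := hA k.toNat (by omega) (by omega)
    rwa [Int.toNat_of_nonneg (by omega)] at h2
  -- periodicity of the partial sums
  have Tper : ∀ m : ℤ, 0 ≤ m → Tz h (m + ((d * n : ℕ) : ℤ)) = Tz h m := by
    refine Int.le_induction ?_ ?_
    · rw [zero_add, hT0, Tz_nonpos h le_rfl]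
    · intro m hm ih
      have hp := hper (m + 1) (by omega)
      have e : Tz h (m + 1 + ((d * n : ℕ) : ℤ))
          = Tz h (m + ((d * n : ℕ) : ℤ))
            + (-h (m + 1 + ((d * n : ℕ) : ℤ)) + h (-(m + 1 + ((d * n : ℕ) : ℤ)))) := by
        rw [show m + 1 + ((d * n : ℕ) : ℤ) = (m + ((d * n : ℕ) : ℤ)) + 1 by ring]
        exact Tz_succ h (by omega)
      rw [e, ih, show m + 1 + ((d * n : ℕ) : ℤ) = (m + 1) + ((d * n : ℕ) : ℤ) by ring,
        hp.1, show -((m + 1) + ((d * n : ℕ) : ℤ)) = -(m + 1) - ((d * n : ℕ) : ℤ) by ring,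
        hp.2, Tz_succ h hm]
  -- symmetry of Φ(m) = T(m) - h(m) + h(-m)
  have PhiSym : ∀ m : ℤ, 1 ≤ m → m ≤ ((d * n : ℕ) : ℤ) →
      (Tz h m - h m + h (-m))
        - (Tz h (((d * n : ℕ) : ℤ) + 1 - m) - h (((d * n : ℕ) : ℤ) + 1 - m)
            + h (-(((d * n : ℕ) : ℤ) + 1 - m))) = 0 := by
    refine Int.le_induction ?_ ?_
    · intro _
      rw [show ((d * n : ℕ) : ℤ) + 1 - 1 = ((d * n : ℕ) : ℤ) by ring, Tz_one, hT0, hhN, hhN']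
      abel
    · intro m hm ih hle
      have ihh := ih (by omega)
      rw [show ((d * n : ℕ) : ℤ) + 1 - m = ((d * n : ℕ) : ℤ) - m + 1 by ring] at ihh
      have e1 := hA' m hm (by omega)
      rw [show -m - 1 = -(m + 1) by ring] at e1
      have e2 := hA' (((d * n : ℕ) : ℤ) - m) (by omega) (by omega)
      rw [show ((d * n : ℕ) : ℤ) - (((d * n : ℕ) : ℤ) - m) + 1 = m + 1 by ring,
        show ((d * n : ℕ) : ℤ) - (((d * n : ℕ) : ℤ) - m) = m by ring,
        show -(((d * n : ℕ) : ℤ) - m) - 1 = -(((d * n : ℕ) : ℤ) - m + 1) by ring] at e2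
      have s1 := Tz_succ h (by omega : (0:ℤ) ≤ m)
      have s2 := Tz_succ h (by omega : (0:ℤ) ≤ ((d * n : ℕ) : ℤ) - m)
      rw [show ((d * n : ℕ) : ℤ) + 1 - (m + 1) = ((d * n : ℕ) : ℤ) - m by ring]
      have key : (Tz h (m + 1) - h (m + 1) + h (-(m + 1)))
          - (Tz h (((d * n : ℕ) : ℤ) - m) - h (((d * n : ℕ) : ℤ) - m)
              + h (-(((d * n : ℕ) : ℤ) - m)))
        = ((Tz h m - h m + h (-m))
            - (Tz h (((d * n : ℕ) : ℤ) - m + 1) - h (((d * n : ℕ) : ℤ) - m + 1)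
                + h (-(((d * n : ℕ) : ℤ) - m + 1))))
          + (Tz h (m + 1) - (Tz h m + (-h (m + 1) + h (-(m + 1)))))
          + (Tz h (((d * n : ℕ) : ℤ) - m + 1)
              - (Tz h (((d * n : ℕ) : ℤ) - m)
                  + (-h (((d * n : ℕ) : ℤ) - m + 1) + h (-(((d * n : ℕ) : ℤ) - m + 1)))))
          - ((2 • h (((d * n : ℕ) : ℤ) - m + 1) - h (((d * n : ℕ) : ℤ) - m))
              - (2 • h (-(m + 1)) - h (-m)))
          - ((2 • h (m + 1) - h m)
              - (2 • h (-(((d * n : ℕ) : ℤ) - m + 1)) - h (-(((d * n : ℕ) : ℤ) - m)))) := by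
        abel
      rw [ihh, sub_eq_zero_of_eq s1, sub_eq_zero_of_eq s2,
        sub_eq_zero_of_eq e1, sub_eq_zero_of_eq e2] at key
      simpa using key
  refine ⟨?_, ?_, ?_, ?_, ?_, ?_, ?_⟩
  · -- value at 0
    simp [P1act]
  · -- generation
    rw [eq_top_iff, ← hcl, AddSubgroup.closure_le]
    set K := AddSubgroup.closure (Set.range (P1act h)) with hK
    have hgK : ∀ k : ℤ, P1act h k ∈ K := fun k => AddSubgroup.subset_closure ⟨k, rfl⟩
    have hTK : ∀ m : ℤ, 0 ≤ m → Tz h m ∈ K := by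
      refine Int.le_induction ?_ ?_
      · rw [Tz_nonpos h le_rfl]; exact zero_mem K
      · intro m hm ih
        have e : Tz h (m + 1) = Tz h m + (P1act h (-(m + 1)) - P1act h (m + 1)) := by
          rw [gneg h (by omega : (1:ℤ) ≤ m + 1), gpos h (by omega : (1:ℤ) ≤ m + 1),
            show m + 1 - 1 = m by ring, Tz_succ h hm]
          abel
        rw [e]
        exact add_mem ih (sub_mem (hgK _) (hgK _))
    rintro x ⟨k, rfl⟩
    simp only [SetLike.mem_coe]
    rcases lt_trichotomy k 0 with hk | hk | hk
    · have e : h k = P1act h (-k) - 2 • Tz h (-k - 1) := by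
        rw [gpos h (by omega : (1:ℤ) ≤ -k), neg_neg]
        abel
      rw [e]
      exact sub_mem (hgK _) (nsmul_mem (hTK _ (by omega)) 2)
    · rw [hk, h0]; exact zero_mem K
    · have e : h k = P1act h (-k) - 2 • Tz h k := by
        rw [gneg h (by omega : (1:ℤ) ≤ k)]
        abel
      rw [e]
      exact sub_mem (hgK _) (nsmul_mem (hTK _ (by omega)) 2)
  · -- periodicity
    intro k hk
    constructor
    · rw [gpos h (by omega : (1:ℤ) ≤ k + ((d * n : ℕ) : ℤ)), gpos h hk,
        show k + ((d * n : ℕ) : ℤ) - 1 = (k - 1) + ((d * n : ℕ) : ℤ) by ring,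
        Tper (k - 1) (by omega),
        show -(k + ((d * n : ℕ) : ℤ)) = -k - ((d * n : ℕ) : ℤ) by ring,
        (hper k hk).2]
    · rw [show -k - ((d * n : ℕ) : ℤ) = -(k + ((d * n : ℕ) : ℤ)) by ring,
        gneg h (by omega : (1:ℤ) ≤ k + ((d * n : ℕ) : ℤ)), gneg h hk,
        Tper k (by omega), (hper k hk).1]
  · -- period sum
    have e : ∀ j ∈ Finset.Icc 1 (d * n),
        -P1act h (j : ℤ) + P1act h (-(j : ℤ)) = -h (j : ℤ) + h (-(j : ℤ)) := by
      intro j hj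
      have hj1 : (1:ℤ) ≤ (j : ℤ) := by
        have := (Finset.mem_Icc.mp hj).1
        omega
      rw [gpos h hj1, gneg h hj1]
      have s := Tz_succ h (by omega : (0:ℤ) ≤ (j : ℤ) - 1)
      rw [show (j : ℤ) - 1 + 1 = (j : ℤ) by ring] at s
      rw [s]
      abel
    rw [Finset.sum_congr rfl e]
    exact hsum
  · -- forper relations
    intro k hk1 hk2
    have hk1' : (1:ℤ) ≤ (k : ℤ) := by exact_mod_cast hk1
    have hk2' : (k : ℤ) < ((d * n : ℕ) : ℤ) := by exact_mod_cast hk2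
    rw [gpos h (by omega : (1:ℤ) ≤ ((d * n : ℕ) : ℤ) - (k : ℤ) + 1),
      gpos h (by omega : (1:ℤ) ≤ ((d * n : ℕ) : ℤ) - (k : ℤ)),
      show ((d * n : ℕ) : ℤ) - (k : ℤ) + 1 - 1 = ((d * n : ℕ) : ℤ) - (k : ℤ) by ring,
      show -(k : ℤ) - 1 = -((k : ℤ) + 1) by ring,
      gneg h (by omega : (1:ℤ) ≤ (k : ℤ) + 1), gneg h hk1']
    have e1 := hA' (((d * n : ℕ) : ℤ) - (k : ℤ)) (by omega) (by omega)
    rw [show ((d * n : ℕ) : ℤ) - (((d * n : ℕ) : ℤ) - (k : ℤ)) + 1 = (k : ℤ) + 1 by ring,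
      show ((d * n : ℕ) : ℤ) - (((d * n : ℕ) : ℤ) - (k : ℤ)) = (k : ℤ) by ring,
      show -(((d * n : ℕ) : ℤ) - (k : ℤ)) - 1 = -(((d * n : ℕ) : ℤ) - (k : ℤ) + 1) by ring] at e1
    have ePhi := PhiSym ((k : ℤ) + 1) (by omega) (by omega)
    rw [show ((d * n : ℕ) : ℤ) + 1 - ((k : ℤ) + 1) = ((d * n : ℕ) : ℤ) - (k : ℤ) by ring] at ePhi
    have s1 := Tz_succ h (by omega : (0:ℤ) ≤ ((d * n : ℕ) : ℤ) - (k : ℤ) - 1)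
    rw [show ((d * n : ℕ) : ℤ) - (k : ℤ) - 1 + 1 = ((d * n : ℕ) : ℤ) - (k : ℤ) by ring] at s1
    have s2 := Tz_succ h (by omega : (0:ℤ) ≤ (k : ℤ))
    have key : (2 • (h (-(((d * n : ℕ) : ℤ) - (k : ℤ) + 1)) + 2 • Tz h (((d * n : ℕ) : ℤ) - (k : ℤ)))
          - (h (-(((d * n : ℕ) : ℤ) - (k : ℤ))) + 2 • Tz h (((d * n : ℕ) : ℤ) - (k : ℤ) - 1)))
        - (2 • (h ((k : ℤ) + 1) + 2 • Tz h ((k : ℤ) + 1)) - (h (k : ℤ) + 2 • Tz h (k : ℤ)))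
      = -((2 • h ((k : ℤ) + 1) - h (k : ℤ))
            - (2 • h (-(((d * n : ℕ) : ℤ) - (k : ℤ) + 1)) - h (-(((d * n : ℕ) : ℤ) - (k : ℤ)))))
        + 2 • (Tz h (((d * n : ℕ) : ℤ) - (k : ℤ))
            - (Tz h (((d * n : ℕ) : ℤ) - (k : ℤ) - 1)
                + (-h (((d * n : ℕ) : ℤ) - (k : ℤ)) + h (-(((d * n : ℕ) : ℤ) - (k : ℤ))))))
        - 2 • (Tz h ((k : ℤ) + 1) - (Tz h (k : ℤ) + (-h ((k : ℤ) + 1) + h (-((k : ℤ) + 1)))))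
        - 2 • ((Tz h ((k : ℤ) + 1) - h ((k : ℤ) + 1) + h (-((k : ℤ) + 1)))
            - (Tz h (((d * n : ℕ) : ℤ) - (k : ℤ)) - h (((d * n : ℕ) : ℤ) - (k : ℤ))
                + h (-(((d * n : ℕ) : ℤ) - (k : ℤ))))) := by
      abel
    rw [sub_eq_zero_of_eq e1, sub_eq_zero_of_eq s1, sub_eq_zero_of_eq s2, ePhi] at key
    simp only [neg_zero, smul_zero, add_zero, sub_zero, zero_add] at key
    exact sub_eq_zero.mp key
  · -- value at dn
    by_cases hdn : d * n = 0
    · have hz2 : 2 • h 1 = 0 := by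
        have e := hhN'
        rw [hdn] at e
        simp only [Nat.cast_zero, neg_zero, h0] at e
        exact neg_eq_zero.mp e.symm
      have hz1 : 2 • h (-1) = 0 := by
        have e := hhN
        rw [hdn] at e
        simp only [Nat.cast_zero, h0] at e
        exact neg_eq_zero.mp e.symm
      rw [hdn]
      simp only [Nat.cast_zero]
      rw [show P1act h 0 = 0 by simp [P1act], gneg h le_rfl, Tz_one]
      have key : (-(2 • (h 1 + 2 • (-h 1 + h (-1)))) : G) = 2 • h 1 - 2 • (2 • h (-1)) := by
        abel
      rw [key, hz1, hz2]
      simp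
    · have h1N : (1:ℤ) ≤ ((d * n : ℕ) : ℤ) := by
        have : 1 ≤ d * n := Nat.one_le_iff_ne_zero.mpr hdn
        omega
      rw [gpos h h1N, gneg h le_rfl, Tz_one]
      have s := Tz_succ h (by omega : (0:ℤ) ≤ ((d * n : ℕ) : ℤ) - 1)
      rw [show ((d * n : ℕ) : ℤ) - 1 + 1 = ((d * n : ℕ) : ℤ) by ring, hT0] at s
      have key : (h (-((d * n : ℕ) : ℤ)) + 2 • Tz h (((d * n : ℕ) : ℤ) - 1))
            - (-(2 • (h 1 + 2 • (-h 1 + h (-1)))))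
          = -(h (-((d * n : ℕ) : ℤ)) - (-(2 • h 1)))
            + 2 • (h ((d * n : ℕ) : ℤ) - (-(2 • h (-1))))
            + 2 • (Tz h (((d * n : ℕ) : ℤ) - 1)
                + (-h ((d * n : ℕ) : ℤ) + h (-((d * n : ℕ) : ℤ)))) := by
        abel
      rw [sub_eq_zero_of_eq hhN', sub_eq_zero_of_eq hhN, s.symm] at key
      · simp only [neg_zero, smul_zero, add_zero, zero_add] at key
        exact sub_eq_zero.mp key
  · -- value at -dn
    by_cases hdn : d * n = 0
    · have hz1 : 2 • h (-1) = 0 := by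
        have e := hhN
        rw [hdn] at e
        simp only [Nat.cast_zero, h0] at e
        exact neg_eq_zero.mp e.symm
      rw [hdn]
      simp only [Nat.cast_zero, neg_zero]
      rw [show P1act h 0 = 0 by simp [P1act], gpos h le_rfl,
        show (1:ℤ) - 1 = 0 by ring, Tz_nonpos h le_rfl]
      rw [show h (-1) + 2 • (0:G) = h (-1) by simp, hz1, neg_zero]
    · have h1N : (1:ℤ) ≤ ((d * n : ℕ) : ℤ) := by
        have : 1 ≤ d * n := Nat.one_le_iff_ne_zero.mpr hdn
        omega
      rw [gneg h h1N, hT0, gpos h le_rfl, show (1:ℤ) - 1 = 0 by ring, Tz_nonpos h le_rfl]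
      simp only [smul_zero, add_zero]
      exact hhN
end

section
/- Let n ∈ ℕ. A weakly n-periodic sequence h : ℤ → ℤ/2ℤ with h_0 = 0 is a fixed point of P_1 (i.e., h_k = h_{-k} for all k) if and only if h_k = h_{n-k} + h_n for all k. For n even, the number of nonzero fixed points of P_1 in W_n equals 2^{n/2} − 1, and for n odd it equals 2^{(n+1)/2} − 1. -/
/-- `h` is weakly `n`-periodic: `h (k + n) - h k = h n` for all `k : ℤ`. -/
def WeaklyPeriodic (n : ℕ) (h : ℤ → ZMod 2) : Prop :=
  ∀ k : ℤ, h (k + n) - h k = h n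

namespace Stmt12Aux

lemma z2_addself : ∀ x : ZMod 2, x + x = 0 := by decide

lemma wp_add {n : ℕ} {h : ℤ → ZMod 2} (hw : WeaklyPeriodic n h) (k : ℤ) :
    h (k + n) = h k + h n := by
  have h1 := hw k
  have h2 : h (k + n) = h (k + n) - h k + h k := by ring
  rw [h1] at h2
  rw [h2]; ring

lemma wp_mul {n : ℕ} {h : ℤ → ZMod 2} (hw : WeaklyPeriodic n h) (r : ℤ) (q : ℤ) :
    h (r + q * n) = h r + (q : ZMod 2) * h n := by
  induction q using Int.induction_on with
  | zero => simp
  | succ i ih =>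
    have e : r + ((i : ℤ) + 1) * n = (r + i * n) + n := by ring
    rw [e, wp_add hw, ih]
    push_cast
    ring
  | pred i ih =>
    have e : r + (-(i : ℤ)) * n = (r + (-(i:ℤ) - 1) * n) + n := by ring
    have h2 := wp_add hw (r + (-(i:ℤ) - 1) * n)
    rw [← e] at h2
    have h3 : h (r + (-(i:ℤ) - 1) * n) = h (r + (-(i:ℤ)) * n) + h n := by
      rw [h2, add_assoc, z2_addself, add_zero]
    rw [h3, ih]
    push_cast
    linear_combination z2_addself (h n)

def Bfun (n : ℕ) (b : Fin ((n+1)/2) → ZMod 2) (j : ℤ) : ZMod 2 :=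
  if hj : 1 ≤ j ∧ j ≤ ((n+1)/2 : ℕ) then b ⟨(j-1).toNat, by omega⟩ else 0

def cval (n : ℕ) (b : Fin ((n+1)/2) → ZMod 2) : ZMod 2 :=
  if Even n then 0 else Bfun n b ((n+1)/2 : ℕ) + Bfun n b ((((n+1)/2 : ℕ) : ℤ) - 1)

def afun (n : ℕ) (b : Fin ((n+1)/2) → ZMod 2) (r : ℤ) : ZMod 2 :=
  if r ≤ ((n+1)/2 : ℕ) then Bfun n b r else Bfun n b (n - r) + cval n b

def hfun (n : ℕ) (b : Fin ((n+1)/2) → ZMod 2) (k : ℤ) : ZMod 2 :=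
  afun n b (k % (n : ℤ)) + ((k / (n : ℤ) : ℤ) : ZMod 2) * cval n b

lemma Bfun_zero (n : ℕ) (b : Fin ((n+1)/2) → ZMod 2) : Bfun n b 0 = 0 := by
  rw [Bfun, dif_neg]; omega

lemma Bval (n : ℕ) (b : Fin ((n+1)/2) → ZMod 2) (i : Fin ((n+1)/2)) :
    Bfun n b ((i : ℤ) + 1) = b i := by
  have hi := i.isLt
  rw [Bfun, dif_pos (by constructor <;> omega)]
  congr 1
  apply Fin.ext
  show (((i:ℤ) + 1 - 1).toNat) = (i : ℕ)
  omega

lemma aval_symm (n : ℕ) (hn : 1 ≤ n) (b : Fin ((n+1)/2) → ZMod 2) (r : ℤ)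
    (h1 : 1 ≤ r) (h2 : r ≤ (n:ℤ) - 1) :
    afun n b ((n:ℤ) - r) = afun n b r + cval n b := by
  by_cases hr1 : r ≤ (((n+1)/2 : ℕ) : ℤ)
  · by_cases hr2 : (n:ℤ) - r ≤ (((n+1)/2 : ℕ) : ℤ)
    · rw [afun, if_pos hr2, afun, if_pos hr1]
      rcases Nat.even_or_odd n with he | ho
      · obtain ⟨t, ht⟩ := he
        have hr : r = (((n+1)/2 : ℕ) : ℤ) := by omega
        have hnr : (n:ℤ) - r = (((n+1)/2 : ℕ) : ℤ) := by omega
        rw [cval, if_pos ⟨t, ht⟩, hnr, hr, add_zero]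
      · obtain ⟨t, ht⟩ := ho
        have hne : ¬ Even n := by rw [Nat.even_iff]; omega
        rw [cval, if_neg hne]
        rcases (by omega : r = (t:ℤ) ∨ r = (t:ℤ)+1) with h | h
        · have e1 : (n:ℤ) - r = (((n+1)/2 : ℕ) : ℤ) := by omega
          have e2 : r = (((n+1)/2 : ℕ) : ℤ) - 1 := by omega
          rw [e1, e2]
          have key : ∀ x y : ZMod 2, x = y + (x + y) := by decide
          exact key _ _
        · have e1 : (n:ℤ) - r = (((n+1)/2 : ℕ) : ℤ) - 1 := by omega
          have e2 : r = (((n+1)/2 : ℕ) : ℤ) := by omega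
          rw [e1, e2]
          have key : ∀ x y : ZMod 2, y = x + (x + y) := by decide
          exact key _ _
    · rw [afun, if_neg hr2]
      have e : (n:ℤ) - ((n:ℤ) - r) = r := by ring
      rw [e, afun, if_pos hr1]
  · by_cases hr2 : (n:ℤ) - r ≤ (((n+1)/2 : ℕ) : ℤ)
    · rw [afun, if_pos hr2, afun, if_neg hr1]
      have key : ∀ x c : ZMod 2, x = (x + c) + c := by decide
      exact key _ _
    · exfalso; omega

lemma hfun_zero_val (n : ℕ) (hn : 1 ≤ n) (b : Fin ((n+1)/2) → ZMod 2) :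
    hfun n b 0 = 0 := by
  rw [hfun, Int.zero_emod, Int.zero_ediv, afun, if_pos (by positivity), Bfun_zero]
  simp

lemma hfun_wp (n : ℕ) (hn : 1 ≤ n) (b : Fin ((n+1)/2) → ZMod 2) :
    WeaklyPeriodic n (hfun n b) := by
  intro k
  have hn0 : (n:ℤ) ≠ 0 := by omega
  have e1 : (k + (n:ℤ)) % (n:ℤ) = k % (n:ℤ) := by
    rw [show k + (n:ℤ) = k + 1 * (n:ℤ) by ring, Int.add_mul_emod_self_right]
  have e2 : (k + (n:ℤ)) / (n:ℤ) = k / (n:ℤ) + 1 := by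
    rw [show k + (n:ℤ) = k + 1 * (n:ℤ) by ring, Int.add_mul_ediv_right _ _ hn0]
  have hnn : hfun n b (n:ℤ) = cval n b := by
    rw [hfun, Int.emod_self, Int.ediv_self hn0, afun, if_pos (by positivity), Bfun_zero]
    simp
  rw [hfun, hfun, hnn, e1, e2]
  push_cast
  ring

lemma hfun_symm (n : ℕ) (hn : 1 ≤ n) (b : Fin ((n+1)/2) → ZMod 2) (k : ℤ) :
    hfun n b (-k) = hfun n b k := by
  have hn0 : (n:ℤ) ≠ 0 := by omega
  have hn0' : (0:ℤ) < n := by omega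
  have hk : (n:ℤ) * (k / n) + k % n = k := Int.mul_ediv_add_emod k n
  have hr0 : 0 ≤ k % (n:ℤ) := Int.emod_nonneg k hn0
  have hrn : k % (n:ℤ) < n := Int.emod_lt_of_pos k hn0'
  by_cases h0 : k % (n:ℤ) = 0
  · have e1 : -k = (n:ℤ) * (-(k / n)) := by linear_combination hk - h0
    have e2 : (-k) % (n:ℤ) = 0 := by rw [e1]; exact Int.mul_emod_right _ _
    have e3 : (-k) / (n:ℤ) = -(k / n) := by rw [e1]; exact Int.mul_ediv_cancel_left _ hn0
    rw [hfun, hfun, e2, e3, h0]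
    push_cast
    have key : ∀ (a Q c : ZMod 2), a + (-Q) * c = a + Q * c := by decide
    exact key _ _ _
  · have h1 : 1 ≤ k % (n:ℤ) := by omega
    have e1 : -k = ((n:ℤ) - k % n) + (-(k / n) - 1) * n := by linear_combination hk
    have e2 : (-k) % (n:ℤ) = (n:ℤ) - k % n := by
      rw [e1, Int.add_mul_emod_self_right]
      exact Int.emod_eq_of_lt (by omega) (by omega)
    have e3 : (-k) / (n:ℤ) = -(k / n) - 1 := by
      rw [e1, Int.add_mul_ediv_right _ _ hn0, Int.ediv_eq_zero_of_lt (by omega) (by omega),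
        zero_add]
    rw [hfun, hfun, e2, e3, aval_symm n hn b _ h1 (by omega)]
    push_cast
    have key : ∀ (x Q c : ZMod 2), (x + c) + (-Q - 1) * c = x + Q * c := by decide
    exact key _ _ _

lemma hfun_val (n : ℕ) (hn : 1 ≤ n) (b : Fin ((n+1)/2) → ZMod 2) (i : Fin ((n+1)/2)) :
    hfun n b ((i:ℤ) + 1) = b i := by
  have hi := i.isLt
  rcases eq_or_lt_of_le hn with h1 | h2
  · -- n = 1
    have hn1 : n = 1 := h1.symm
    subst hn1
    have hi0 : i = ⟨0, by norm_num⟩ := by apply Fin.ext; omega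
    subst hi0
    simp [hfun, afun, cval, Bfun, Int.emod_self]
  · -- n ≥ 2
    have hM : ((n+1)/2 : ℕ) ≤ n - 1 := by omega
    have e2 : ((i:ℤ)+1) % (n:ℤ) = (i:ℤ)+1 := Int.emod_eq_of_lt (by omega) (by omega)
    have e3 : ((i:ℤ)+1) / (n:ℤ) = 0 := Int.ediv_eq_zero_of_lt (by omega) (by omega)
    rw [hfun, e2, e3, afun, if_pos (by omega), Bval]
    simp

lemma hfun_zero_fun (n : ℕ) : hfun n 0 = 0 := by
  funext k
  simp [hfun, afun, cval, Bfun]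

lemma hfun_eq (n : ℕ) (hn : 1 ≤ n) (h : ℤ → ZMod 2) (h0 : h 0 = 0)
    (hw : WeaklyPeriodic n h) (hs : ∀ k : ℤ, h (-k) = h k) :
    hfun n (fun i : Fin ((n+1)/2) => h ((i:ℤ)+1)) = h := by
  set b : Fin ((n+1)/2) → ZMod 2 := fun i => h ((i:ℤ)+1) with hb
  have hB : ∀ j : ℤ, 0 ≤ j → j ≤ (((n+1)/2 : ℕ) : ℤ) → Bfun n b j = h j := by
    intro j hj0 hjM
    by_cases hj : 1 ≤ j
    · rw [Bfun, dif_pos ⟨hj, hjM⟩, hb]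
      show h ((((j - 1).toNat : ℕ) : ℤ) + 1) = h j
      congr 1
      omega
    · have hj0' : j = 0 := by omega
      rw [hj0', Bfun, dif_neg (by omega), h0]
  have hc : cval n b = h n := by
    rcases Nat.even_or_odd n with he | ho
    · obtain ⟨t, ht⟩ := he
      rw [cval, if_pos ⟨t, ht⟩]
      have h1 := wp_add hw (-(t:ℤ))
      have e : (-(t:ℤ) + n) = (t:ℤ) := by omega
      rw [e, hs] at h1
      exact (left_eq_add.mp h1).symm
    · obtain ⟨t, ht⟩ := ho
      have hne : ¬ Even n := by rw [Nat.even_iff]; omega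
      rw [cval, if_neg hne]
      have hM : (((n+1)/2 : ℕ) : ℤ) = (t:ℤ) + 1 := by omega
      rw [hM, show (t:ℤ) + 1 - 1 = (t:ℤ) by ring,
        hB ((t:ℤ)+1) (by omega) (by omega), hB (t:ℤ) (by omega) (by omega)]
      have h1 := wp_add hw (-(t:ℤ)-1)
      have e : (-(t:ℤ)-1 + n) = (t:ℤ) := by omega
      rw [e, show (-(t:ℤ)-1) = -((t:ℤ)+1) by ring, hs] at h1
      rw [h1]
      have key : ∀ x y : ZMod 2, x + (x + y) = y := by decide
      exact key _ _
  have ha : ∀ r : ℤ, 0 ≤ r → r < n → afun n b r = h r := by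
    intro r h0r hrn
    by_cases hrM : r ≤ (((n+1)/2 : ℕ) : ℤ)
    · rw [afun, if_pos hrM, hB r h0r hrM]
    · rw [afun, if_neg hrM, hB ((n:ℤ) - r) (by omega) (by omega), hc]
      have h1 := wp_add hw (-r)
      rw [show -r + (n:ℤ) = (n:ℤ) - r by ring, hs] at h1
      rw [h1]
      have key : ∀ x y : ZMod 2, (x + y) + y = x := by decide
      exact key _ _
  funext k
  have hn0 : (n:ℤ) ≠ 0 := by omega
  have hn0' : (0:ℤ) < n := by omega
  rw [hfun, ha (k % n) (Int.emod_nonneg k hn0) (Int.emod_lt_of_pos k hn0'), hc]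
  have hm := wp_mul hw (k % (n:ℤ)) (k / (n:ℤ))
  rw [← hm]
  congr 1
  have hq := Int.mul_ediv_add_emod k n
  linarith [hq]

def Phi (n : ℕ) (hn : 1 ≤ n) :
    {b : Fin ((n+1)/2) → ZMod 2 // b ≠ 0} →
      {h : ℤ → ZMod 2 // h 0 = 0 ∧ h ≠ 0 ∧ WeaklyPeriodic n h ∧
        ∀ k : ℤ, h (-k) = h k} := fun b =>
  ⟨hfun n b.1, hfun_zero_val n hn b.1, by
    obtain ⟨i, hi⟩ := Function.ne_iff.mp b.2
    intro H
    apply hi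
    have := hfun_val n hn b.1 i
    rw [H] at this
    simpa using this.symm, hfun_wp n hn b.1, hfun_symm n hn b.1⟩

lemma card_eq (n : ℕ) (hn : 1 ≤ n) :
    Nat.card {h : ℤ → ZMod 2 // h 0 = 0 ∧ h ≠ 0 ∧ WeaklyPeriodic n h ∧
        ∀ k : ℤ, h (-k) = h k} = 2 ^ ((n+1)/2) - 1 := by
  have hbij : Function.Bijective (Phi n hn) := by
    constructor
    · rintro ⟨b, hb⟩ ⟨b', hb'⟩ hEq
      have hfn : hfun n b = hfun n b' := congrArg Subtype.val hEq
      apply Subtype.ext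
      show b = b'
      funext i
      rw [← hfun_val n hn b i, ← hfun_val n hn b' i, hfn]
    · rintro ⟨h, h0, hne, hw, hs⟩
      refine ⟨⟨fun i => h ((i:ℤ)+1), ?_⟩, ?_⟩
      · intro Hb
        apply hne
        rw [← hfun_eq n hn h h0 hw hs, Hb, hfun_zero_fun]
      · exact Subtype.ext (hfun_eq n hn h h0 hw hs)
  rw [← Nat.card_eq_of_bijective (Phi n hn) hbij, Nat.card_eq_fintype_card,
    Fintype.card_subtype_compl, Fintype.card_subtype_eq]
  simp [ZMod.card]

end Stmt12Aux

open Stmt12Aux in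
theorem stmt12 (n : ℕ) (hn : 1 ≤ n) :
    (∀ h : ℤ → ZMod 2, h 0 = 0 → WeaklyPeriodic n h →
      ((∀ k : ℤ, h (-k) = h k) ↔ ∀ k : ℤ, h k = h ((n : ℤ) - k) + h n)) ∧
    (Even n → Nat.card {h : ℤ → ZMod 2 // h 0 = 0 ∧ h ≠ 0 ∧ WeaklyPeriodic n h ∧
        ∀ k : ℤ, h (-k) = h k} = 2 ^ (n / 2) - 1) ∧
    (Odd n → Nat.card {h : ℤ → ZMod 2 // h 0 = 0 ∧ h ≠ 0 ∧ WeaklyPeriodic n h ∧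
        ∀ k : ℤ, h (-k) = h k} = 2 ^ ((n + 1) / 2) - 1) := by
  refine ⟨?_, ?_, ?_⟩
  · intro h h0 hw
    have key : ∀ k : ℤ, h ((n:ℤ) - k) + h n = h (-k) := by
      intro k
      have h1 := wp_add hw (-k)
      rw [show -k + (n:ℤ) = (n:ℤ) - k by ring] at h1
      rw [h1, add_assoc, z2_addself, add_zero]
    constructor
    · intro H k
      rw [key k]
      exact (H k).symm
    · intro H k
      have := H k
      rw [key k] at this
      exact this.symm
  · intro he
    obtain ⟨t, ht⟩ := he
    have h2 : (n+1)/2 = n/2 := by omega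
    rw [card_eq n hn, h2]
  · intro _
    exact card_eq n hn
end

section
/- Let n ∈ ℕ. A weakly n-periodic sequence h : ℤ → ℤ/2ℤ with h_0 = 0 is a fixed point of P_2 (defined by (P_2·h)_k = h_{-1} + h_{-k-1} for k ≠ -1, (P_2·h)_{-1} = h_{-1}) if and only if h_k = h_{n-1} + h_{n-k-1} for all k ≠ -1. The number of such nonzero fixed points in W_n is 2^{⌊n/2⌋+1} − 1. -/
/-- The action of `P₂` on `ℤ/2ℤ`-valued defining vectors:
`(P₂·h)_k = h_{-1} + h_{-k-1}` for `k ≠ -1` and `(P₂·h)_{-1} = h_{-1}`. -/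
def P2z (h : ℤ → ZMod 2) : ℤ → ZMod 2 := fun k =>
  if k = -1 then h (-1) else h (-1) + h (-k - 1)

namespace Stmt13Aux

variable {n : ℕ} {h : ℤ → ZMod 2}

lemma wp_add (hw : WeaklyPeriodic n h) (k : ℤ) : h (k + n) = h k + h n := by
  have := hw k; linear_combination this

lemma sub_n (hw : WeaklyPeriodic n h) (x : ℤ) : h (x - n) = h x + h n := by
  have := wp_add hw (x - n)
  rw [sub_add_cancel] at this
  have hc : ∀ a b c : ZMod 2, a = b + c → b = a + c := by decide
  exact hc _ _ _ this

lemma wp_mul (hw : WeaklyPeriodic n h) (q k : ℤ) :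
    h (k + q * n) = h k + (q : ZMod 2) * h n := by
  induction q using Int.induction_on with
  | zero => simp
  | succ i ih =>
      have e := wp_add hw (k + i * n)
      have : k + ((i : ℤ) + 1) * n = (k + i * n) + n := by ring
      rw [this, e, ih]
      push_cast
      ring
  | pred i ih =>
      have e := wp_add hw (k + (-(i : ℤ) - 1) * n)
      have : k + (-(i : ℤ) - 1) * n + n = k + (-(i : ℤ)) * n := by ring
      rw [this] at e
      have hc : ∀ a b c : ZMod 2, a = b + c → b = a + c := by decide
      have := hc _ _ _ (e.symm.trans ih)
      rw [this]
      have h2 : ∀ x : ZMod 2, x + x = 0 := by decide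
      push_cast
      linear_combination (i : ZMod 2) * h2 (h n)

lemma wp_decomp (hw : WeaklyPeriodic n h) (k : ℤ) :
    h k = h (k % (n : ℤ)) + ((k / (n : ℤ) : ℤ) : ZMod 2) * h n := by
  have e : k = k % (n : ℤ) + (k / (n : ℤ)) * (n : ℤ) := by
    have := Int.emod_add_mul_ediv k (n : ℤ); linarith
  conv_lhs => rw [e]
  exact wp_mul hw _ _

lemma part1' (hw : WeaklyPeriodic n h) :
    P2z h = h ↔ ∀ k : ℤ, k ≠ -1 → h k = h ((n : ℤ) - 1) + h ((n : ℤ) - k - 1) := by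
  have e1 : h (-1) = h ((n : ℤ) - 1) + h n := by
    have := sub_n hw ((n : ℤ) - 1)
    rw [show (n : ℤ) - 1 - n = -1 by ring] at this
    exact this
  have e2 : ∀ k : ℤ, h (-k - 1) = h ((n : ℤ) - k - 1) + h n := by
    intro k
    have := sub_n hw ((n : ℤ) - k - 1)
    rw [show (n : ℤ) - k - 1 - n = -k - 1 by ring] at this
    exact this
  have hc : ∀ a b c : ZMod 2, (a + c) + (b + c) = a + b := by decide
  constructor
  · intro hp k hk
    have := congrFun hp k
    simp only [P2z, if_neg hk] at this
    rw [← this, e1, e2 k, hc]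
  · intro H
    funext k
    simp only [P2z]
    split
    · next hk => rw [hk]
    · next hk =>
        rw [H k hk, e1, e2 k, hc]

lemma allcond_iff (hw : WeaklyPeriodic n h) :
    (∀ k : ℤ, k ≠ -1 → h k = h ((n : ℤ) - 1) + h ((n : ℤ) - k - 1)) ↔
    (∀ k : ℤ, h k = h ((n : ℤ) - 1) + h ((n : ℤ) - k - 1)) := by
  constructor
  · intro H k
    by_cases hk : k = -1
    · subst hk
      rw [show (n : ℤ) - (-1) - 1 = (n : ℤ) by ring]
      have := sub_n hw ((n : ℤ) - 1)
      rw [show (n : ℤ) - 1 - n = -1 by ring] at this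
      exact this
    · exact H k hk
  · intro H k _; exact H k

lemma fix_iff_all (hw : WeaklyPeriodic n h) :
    P2z h = h ↔ ∀ k : ℤ, h k = h ((n : ℤ) - 1) + h ((n : ℤ) - k - 1) :=
  (part1' hw).trans (allcond_iff hw)

lemma cond_reduce (hn : 1 ≤ n) (hw : WeaklyPeriodic n h)
    (H : ∀ r : ℤ, 0 ≤ r → r < n → h r = h ((n : ℤ) - 1) + h ((n : ℤ) - r - 1)) :
    ∀ k : ℤ, h k = h ((n : ℤ) - 1) + h ((n : ℤ) - k - 1) := by
  intro k
  have hn0 : (0 : ℤ) < (n : ℤ) := by exact_mod_cast hn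
  set r := k % (n : ℤ) with hr
  set q := k / (n : ℤ) with hq
  have hr0 : 0 ≤ r := Int.emod_nonneg k (by omega)
  have hrn : r < n := Int.emod_lt_of_pos k hn0
  have e1 : h k = h r + (q : ZMod 2) * h n := wp_decomp hw k
  have e2 : h ((n : ℤ) - k - 1) = h ((n : ℤ) - r - 1) + ((-q : ℤ) : ZMod 2) * h n := by
    have ekey : (n : ℤ) - k - 1 = ((n : ℤ) - r - 1) + (-q) * n := by
      have := Int.emod_add_mul_ediv k (n : ℤ)
      rw [← hr, ← hq] at this
      linarith
    rw [ekey]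
    exact wp_mul hw _ _
  have hneg : ((-q : ℤ) : ZMod 2) = (q : ZMod 2) := by
    push_cast
    have : ∀ x : ZMod 2, -x = x := by decide
    exact this _
  rw [e1, e2, hneg, H r hr0 hrn]
  ring

end Stmt13Aux

namespace Stmt13Aux2
open Stmt13Aux

/-- extend a `Fin (n/2)`-vector by zero -/
def wext (n : ℕ) (v : Fin (n / 2) → ZMod 2) : ℕ → ZMod 2 :=
  fun k => if hk : k < n / 2 then v ⟨k, hk⟩ else 0

/-- base values on `0..n/2` -/
def g0 (w : ℕ → ZMod 2) : ℕ → ZMod 2 := fun k => if k = 0 then 0 else w (k - 1)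

def aval (n : ℕ) (w : ℕ → ZMod 2) : ZMod 2 := g0 w (n / 2) + g0 w (n - 1 - n / 2)

def gf (n : ℕ) (w : ℕ → ZMod 2) : ℕ → ZMod 2 :=
  fun k => if k ≤ n / 2 then g0 w k else aval n w + g0 w (n - 1 - k)

def hf (n : ℕ) (w : ℕ → ZMod 2) (c : ZMod 2) : ℤ → ZMod 2 :=
  fun k => gf n w (k % (n : ℤ)).toNat + ((k / (n : ℤ) : ℤ) : ZMod 2) * c

variable {n : ℕ} {w : ℕ → ZMod 2} {c : ZMod 2}

lemma gf_zero : gf n w 0 = 0 := by simp [gf, g0]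

lemma hf_at (hn : 1 ≤ n) {j : ℕ} (hj : j < n) : hf n w c j = gf n w j := by
  have e1 : ((j : ℤ) % (n : ℤ)) = (j : ℤ) := Int.emod_eq_of_lt (by omega) (by exact_mod_cast hj)
  have e2 : ((j : ℤ) / (n : ℤ)) = 0 := Int.ediv_eq_zero_of_lt (by omega) (by exact_mod_cast hj)
  simp [hf, e1, e2]

lemma hf_zero (hn : 1 ≤ n) : hf n w c 0 = 0 := by
  have : hf n w c ((0 : ℕ) : ℤ) = gf n w 0 := hf_at hn (by omega)
  simpa [gf_zero] using this

lemma hf_wp (hn : 1 ≤ n) : WeaklyPeriodic n (hf n w c) := by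
  intro k
  have hne : (n : ℤ) ≠ 0 := by omega
  have e1 : (k + (n : ℤ)) % (n : ℤ) = k % (n : ℤ) := by
    simpa using Int.add_mul_emod_self_left (a := k) (b := (n : ℤ)) (c := 1)
  have e2 : (k + (n : ℤ)) / (n : ℤ) = k / (n : ℤ) + 1 := by
    have := Int.add_mul_ediv_right k 1 hne
    simpa using this
  have e3 : ((n : ℤ)) % (n : ℤ) = 0 := Int.emod_self
  have e4 : ((n : ℤ)) / (n : ℤ) = 1 := Int.ediv_self hne
  simp only [hf, e1, e2, e3, e4]
  rw [show ((0 : ℤ)).toNat = 0 from rfl, gf_zero]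
  push_cast
  ring

lemma hf_n (hn : 1 ≤ n) : hf n w c n = c := by
  have hne : (n : ℤ) ≠ 0 := by omega
  simp [hf, Int.emod_self, Int.ediv_self hne, gf_zero]

lemma gf_last (hn : 1 ≤ n) : gf n w (n - 1) = aval n w := by
  by_cases hle : n - 1 ≤ n / 2
  · have h1 : n / 2 = n - 1 := by omega
    have h2 : n - 1 - n / 2 = 0 := by omega
    simp only [gf, if_pos hle, aval, h1, h2]
    simp [g0]
  · simp only [gf, if_neg hle]
    have h3 : n - 1 - (n - 1) = 0 := by omega
    simp [h3, g0]

lemma claimC (hn : 1 ≤ n) {j : ℕ} (hj : j < n) :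
    gf n w j = aval n w + gf n w (n - 1 - j) := by
  by_cases h1 : j ≤ n / 2
  · by_cases h2 : n - 1 - j ≤ n / 2
    · have hj' : j = n / 2 ∨ j = n - 1 - n / 2 := by omega
      simp only [gf, if_pos h1, if_pos h2, aval]
      rcases hj' with rfl | rfl
      · have : n - 1 - n / 2 = n - 1 - n / 2 := rfl
        have hcc : ∀ a b : ZMod 2, a = a + b + b := by decide
        exact hcc _ _
      · have e : n - 1 - (n - 1 - n / 2) = n / 2 := by omega
        rw [e]
        have hcc : ∀ a b : ZMod 2, b = a + b + a := by decide
        exact hcc _ _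
    · have e : n - 1 - (n - 1 - j) = j := by omega
      simp only [gf, if_pos h1, if_neg h2, e]
      have hcc : ∀ a b : ZMod 2, b = a + (a + b) := by decide
      exact hcc _ _
  · have h2 : n - 1 - j ≤ n / 2 := by omega
    simp only [gf, if_neg h1, if_pos h2]

end Stmt13Aux2
namespace Stmt13Aux2
open Stmt13Aux

variable {n : ℕ} {w : ℕ → ZMod 2} {c : ZMod 2}

lemma hf_fix (hn : 1 ≤ n) : P2z (hf n w c) = hf n w c := by
  rw [Stmt13Aux.fix_iff_all (hf_wp hn)]
  apply Stmt13Aux.cond_reduce hn (hf_wp hn)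
  intro r hr0 hrn
  obtain ⟨j, rfl⟩ : ∃ j : ℕ, r = (j : ℤ) := ⟨r.toNat, by omega⟩
  have hj : j < n := by omega
  have hj1 : n - 1 < n := by omega
  have hj2 : n - 1 - j < n := by omega
  have e1 : (n : ℤ) - 1 = ((n - 1 : ℕ) : ℤ) := by omega
  have e2 : (n : ℤ) - (j : ℤ) - 1 = ((n - 1 - j : ℕ) : ℤ) := by omega
  rw [e1, e2, hf_at hn hj, hf_at hn hj1, hf_at hn hj2, gf_last hn]
  exact claimC hn hj

lemma hf_vals (hn : 1 ≤ n) (v : Fin (n / 2) → ZMod 2) (i : Fin (n / 2)) :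
    hf n (wext n v) c ((i : ℤ) + 1) = v i := by
  have hi2 : (i : ℕ) + 1 ≤ n / 2 := i.isLt
  have hi : (i : ℕ) + 1 < n := by omega
  have e : ((i : ℤ) + 1) = (((i : ℕ) + 1 : ℕ) : ℤ) := by push_cast; ring
  rw [e, hf_at hn hi]
  simp only [gf, if_pos hi2, g0, if_neg (Nat.succ_ne_zero (i : ℕ)), Nat.add_sub_cancel]
  simp [wext, i.isLt]

lemma wext_zero : wext n 0 = fun _ => 0 := by
  funext k; simp [wext]

lemma hf_zero_zero : hf n (wext n 0) (0 : ZMod 2) = 0 := by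
  funext k
  simp only [hf, wext_zero, gf, aval, g0]
  split <;> split <;> simp

lemma hf_ne_zero (hn : 1 ≤ n) {v : Fin (n / 2) → ZMod 2} {c : ZMod 2}
    (hvc : (v, c) ≠ 0) : hf n (wext n v) c ≠ 0 := by
  intro h0
  apply hvc
  have hv : v = 0 := by
    funext i
    have := hf_vals (c := c) hn v i
    rw [h0] at this
    exact this.symm
  have hc : c = 0 := by
    have := hf_n (w := wext n v) (c := c) hn
    rw [h0] at this
    exact this.symm
  rw [hv, hc]; rfl

lemma recover (hn : 1 ≤ n) {h : ℤ → ZMod 2} (h0 : h 0 = 0) (hw : WeaklyPeriodic n h)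
    (hfix : P2z h = h) :
    hf n (wext n (fun i => h ((i : ℤ) + 1))) (h n) = h := by
  have hcond : ∀ k : ℤ, h k = h ((n : ℤ) - 1) + h ((n : ℤ) - k - 1) :=
    (Stmt13Aux.fix_iff_all hw).mp hfix
  set w := wext n (fun i => h ((i : ℤ) + 1)) with hwdef
  have hg0 : ∀ j : ℕ, j ≤ n / 2 → g0 w j = h j := by
    intro j hj
    match j with
    | 0 => simpa [g0] using h0.symm
    | (m + 1) =>
        have hm : m < n / 2 := by omega
        simp only [g0, if_neg (Nat.succ_ne_zero m), Nat.add_sub_cancel, hwdef, wext, dif_pos hm]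
        norm_cast
  have haval : aval n w = h ((n : ℤ) - 1) := by
    have hle : n - 1 - n / 2 ≤ n / 2 := by omega
    rw [aval, hg0 _ le_rfl, hg0 _ hle]
    have hcd := hcond ((n / 2 : ℕ) : ℤ)
    have e1 : (n : ℤ) - ((n / 2 : ℕ) : ℤ) - 1 = ((n - 1 - n / 2 : ℕ) : ℤ) := by omega
    rw [e1] at hcd
    have hcc : ∀ a b x : ZMod 2, a = b + x → a + x = b := by decide
    exact hcc _ _ _ hcd
  have hgf : ∀ j : ℕ, j < n → gf n w j = h j := by
    intro j hj
    by_cases h1 : j ≤ n / 2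
    · simp only [gf, if_pos h1]
      exact hg0 j h1
    · simp only [gf, if_neg h1]
      rw [hg0 (n - 1 - j) (by omega), haval]
      have hcd := hcond (j : ℤ)
      have e1 : (n : ℤ) - (j : ℤ) - 1 = ((n - 1 - j : ℕ) : ℤ) := by omega
      rw [e1] at hcd
      exact hcd.symm
  funext k
  have hn0 : (0 : ℤ) < (n : ℤ) := by omega
  have hr0 : 0 ≤ k % (n : ℤ) := Int.emod_nonneg k (by omega)
  have hrn : k % (n : ℤ) < (n : ℤ) := Int.emod_lt_of_pos k hn0
  have e0 : (((k % (n : ℤ)).toNat : ℕ) : ℤ) = k % (n : ℤ) := by omega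
  show gf n w ((k % (n : ℤ)).toNat) + ((k / (n : ℤ) : ℤ) : ZMod 2) * h n = h k
  rw [hgf _ (by omega), e0]
  exact (wp_decomp hw k).symm

def solEquiv (n : ℕ) (hn : 1 ≤ n) :
    {h : ℤ → ZMod 2 // h 0 = 0 ∧ h ≠ 0 ∧ WeaklyPeriodic n h ∧ P2z h = h} ≃
    {p : (Fin (n / 2) → ZMod 2) × ZMod 2 // p ≠ 0} where
  toFun s := ⟨((fun i => s.1 ((i : ℤ) + 1)), s.1 n), by
    obtain ⟨h, h0, hne, hw, hfx⟩ := s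
    intro hzero
    apply hne
    have hv : (fun i : Fin (n / 2) => h ((i : ℤ) + 1)) = 0 := congrArg Prod.fst hzero
    have hc : h ((n : ℕ) : ℤ) = 0 := congrArg Prod.snd hzero
    calc h = hf n (wext n (fun i => h ((i : ℤ) + 1))) (h n) := (recover hn h0 hw hfx).symm
    _ = hf n (wext n 0) 0 := by rw [hv, hc]
    _ = 0 := hf_zero_zero⟩
  invFun p := ⟨hf n (wext n p.1.1) p.1.2, hf_zero hn,
    hf_ne_zero hn (by rcases p with ⟨⟨v, c⟩, hp⟩; exact hp), hf_wp hn, hf_fix hn⟩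
  left_inv s := by
    obtain ⟨h, h0, hne, hw, hfx⟩ := s
    exact Subtype.ext (recover hn h0 hw hfx)
  right_inv p := by
    rcases p with ⟨⟨v, c⟩, hp⟩
    apply Subtype.ext
    apply Prod.ext
    · funext i
      exact hf_vals hn v i
    · exact hf_n hn

end Stmt13Aux2
namespace Stmt13Aux2

lemma card_T (n : ℕ) :
    Nat.card {p : (Fin (n / 2) → ZMod 2) × ZMod 2 // p ≠ 0} = 2 ^ (n / 2 + 1) - 1 := by
  classical
  rw [Nat.card_eq_fintype_card]
  have h1 : Fintype.card {p : (Fin (n / 2) → ZMod 2) × ZMod 2 // p ≠ 0}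
      = Fintype.card ((Fin (n / 2) → ZMod 2) × ZMod 2)
        - Fintype.card {p : (Fin (n / 2) → ZMod 2) × ZMod 2 // p = 0} := by
    simpa using Fintype.card_subtype_compl (fun p : (Fin (n / 2) → ZMod 2) × ZMod 2 => p = 0)
  rw [h1, Fintype.card_subtype_eq]
  have h2 : Fintype.card ((Fin (n / 2) → ZMod 2) × ZMod 2) = 2 ^ (n / 2 + 1) := by
    simp [Fintype.card_fun, pow_succ]
  rw [h2]

end Stmt13Aux2

theorem stmt13 (n : ℕ) (hn : 1 ≤ n) :
    (∀ h : ℤ → ZMod 2, h 0 = 0 → WeaklyPeriodic n h →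
      (P2z h = h ↔ ∀ k : ℤ, k ≠ -1 → h k = h ((n : ℤ) - 1) + h ((n : ℤ) - k - 1))) ∧
    Nat.card {h : ℤ → ZMod 2 // h 0 = 0 ∧ h ≠ 0 ∧ WeaklyPeriodic n h ∧ P2z h = h}
      = 2 ^ (n / 2 + 1) - 1 := by
  constructor
  · intro h _ hw
    exact Stmt13Aux.part1' hw
  · rw [Nat.card_congr (Stmt13Aux2.solEquiv n hn)]
    exact Stmt13Aux2.card_T n
end

section
/- There is exactly one nonzero sequence h : ℤ → ℤ/2ℤ with h_0 = 0 that is simultaneously a fixed point of P_1 and of P_2, namely h_k = 1 if k is odd and h_k = 0 if k is even. -/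
/-- The action of `P₁` on `ℤ/2ℤ`-valued defining vectors: `(P₁·h)_k = h_{-k}`. -/
def P1z (h : ℤ → ZMod 2) : ℤ → ZMod 2 := fun k => h (-k)

lemma zmod2_cases : ∀ x : ZMod 2, x = 0 ∨ x = 1 := by decide

lemma intCast_zmod2 (k : ℤ) : (k : ZMod 2) = if Odd k then 1 else 0 := by
  by_cases hk : Odd k
  · rw [if_pos hk]
    obtain ⟨m, rfl⟩ := hk
    push_cast
    rw [show (2 : ZMod 2) = 0 from by decide]
    ring
  · rw [if_neg hk, ZMod.intCast_zmod_eq_zero_iff_dvd]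
    exact (Int.not_odd_iff_even.mp hk).two_dvd

theorem stmt14 :
    {h : ℤ → ZMod 2 | h 0 = 0 ∧ h ≠ 0 ∧ P1z h = h ∧ P2z h = h}
      = {fun k : ℤ => if Odd k then (1 : ZMod 2) else 0} := by
  ext h
  simp only [Set.mem_setOf_eq, Set.mem_singleton_iff]
  constructor
  · rintro ⟨h0, hne, hp1, hp2⟩
    have sym : ∀ k, h (-k) = h k := fun k => congrFun hp1 k
    have hrec : ∀ k : ℤ, k ≠ -1 → h (k + 1) = h k + h 1 := by
      intro k hk
      have hk2 := congrFun hp2 k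
      simp only [P2z, if_neg hk] at hk2
      have e1 : h (-1) = h 1 := sym 1
      have e2 : h (-k - 1) = h (k + 1) := by
        have := sym (k + 1); rwa [show -(k + 1) = -k - 1 by ring] at this
      rw [e1, e2] at hk2
      have two : h 1 + h 1 = 0 := CharTwo.add_self_eq_zero _
      linear_combination hk2 - two
    have hn : ∀ n : ℕ, h n = (n : ZMod 2) * h 1 := by
      intro n
      induction n with
      | zero => simpa using h0
      | succ n ih =>
        have hne1 : (n : ℤ) ≠ -1 := by omega
        have := hrec n hne1
        push_cast at this ⊢
        rw [this, ih]
        ring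
    have hall : ∀ k : ℤ, h k = (k : ZMod 2) * h 1 := by
      intro k
      rcases le_or_gt 0 k with hk | hk
      · obtain ⟨n, rfl⟩ : ∃ n : ℕ, k = n := ⟨k.toNat, by omega⟩
        rw [hn n]; push_cast; ring
      · obtain ⟨n, hnk⟩ : ∃ n : ℕ, -k = n := ⟨(-k).toNat, by omega⟩
        have hs := sym k
        rw [hnk] at hs
        rw [← hs, hn n]
        have hc : ((n : ℤ) : ZMod 2) = (k : ZMod 2) := by
          rw [← hnk]; push_cast
          rw [CharTwo.neg_eq]
        rw [← hc]; push_cast; ring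
    have h1 : h 1 = 1 := by
      rcases zmod2_cases (h 1) with hz | ho
      · exfalso; apply hne; funext k; rw [hall k, hz, mul_zero]; rfl
      · exact ho
    funext k
    rw [hall k, h1, mul_one, intCast_zmod2]
  · rintro rfl
    refine ⟨by simp, ?_, ?_, ?_⟩
    · intro hzero
      have := congrFun hzero 1
      simp at this
    · funext k
      simp [P1z, odd_neg]
    · funext k
      have hm1 : Odd (-1 : ℤ) := ⟨-1, by ring⟩
      by_cases hk : k = -1
      · subst hk; simp [P2z]
      · simp only [P2z, if_neg hk]
        have hodd : Odd (-k - 1) ↔ ¬ Odd k := by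
          simp only [Int.odd_iff]
          omega
        rw [if_pos hm1]
        by_cases ho : Odd k
        · rw [if_pos ho, if_neg (fun hh => (hodd.mp hh) ho)]; ring
        · rw [if_neg ho, if_pos (hodd.mpr ho)]; exact CharTwo.add_self_eq_zero _
end

section
/- Let p be an odd prime. The number of n = p-element orbits ('Striezel type') among the weakly p-periodic classes is 2^{(p+1)/2} − 2, and the number of 2p-element orbits ('Kranz type') in W_p^* equals (2^{p-1} − 1)/p − 2^{(p-1)/2} + 1; in particular p divides 2^{p-1} − 1. -/
/-- The set `W_p^*` of nonzero weakly `p`-periodic sequences (with `h_0 = 0`)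
that are not weakly `m`-periodic for any proper divisor `m` of `p`. -/
def Wstar (p : ℕ) : Set (ℤ → ZMod 2) :=
  {h | h 0 = 0 ∧ h ≠ 0 ∧ WeaklyPeriodic p h ∧
    ∀ m : ℕ, m ∣ p → m ≠ p → ¬ WeaklyPeriodic m h}

/-- One step of the action of the (projective) Veech group generated by `P₁, P₂`. -/
def VeechStep (a b : ℤ → ZMod 2) : Prop := b = P1z a ∨ b = P2z a

/-- The orbit of `h` under the group generated by `P₁` and `P₂`
(both are involutions, so reflexive-transitive closure suffices). -/
def VeechOrbit (h : ℤ → ZMod 2) : Set (ℤ → ZMod 2) :=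
  {g | Relation.ReflTransGen VeechStep h g}

namespace S19

lemma two0 : (2 : ZMod 2) = 0 := by decide

lemma z2 (x : ZMod 2) : x + x = 0 := by linear_combination x * two0

/-- `Cp n h` : `h` is "additively `n`-periodic". -/
def Cp (n : ℤ) (h : ℤ → ZMod 2) : Prop := ∀ k : ℤ, h (k + n) = h k + h n

lemma wp_iff (n : ℕ) (h : ℤ → ZMod 2) : WeaklyPeriodic n h ↔ Cp n h := by
  unfold WeaklyPeriodic Cp
  constructor <;> intro H k <;> have := H k
  · linear_combination this
  · linear_combination this

variable {h : ℤ → ZMod 2} {n m : ℤ}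

lemma cp_add (hm : Cp m h) (hn : Cp n h) : Cp (m + n) h := by
  intro k
  have h1 := hm k
  have h2 := hn (k + m)
  have h3 := hn m
  have e : k + (m + n) = k + m + n := by ring
  rw [e, h2, h1, h3]; ring

lemma cp_zero (h0 : h 0 = 0) : Cp 0 h := by
  intro k; simp [h0]

lemma cp_val_neg (h0 : h 0 = 0) (hn : Cp n h) : h (-n) = h n := by
  have := hn (-n); simp [h0] at this
  linear_combination -this - h n * two0

lemma cp_neg (h0 : h 0 = 0) (hn : Cp n h) : Cp (-n) h := by
  intro k
  have h1 := hn (k + -n)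
  have e : k + -n + n = k := by ring
  rw [e] at h1
  rw [cp_val_neg h0 hn]
  linear_combination -h1 - h n * two0

/-- The subgroup of periods. -/
def K (h : ℤ → ZMod 2) (h0 : h 0 = 0) : AddSubgroup ℤ where
  carrier := {n | Cp n h}
  add_mem' := cp_add
  zero_mem' := cp_zero h0
  neg_mem' := cp_neg h0

lemma cp_gcd {a b : ℤ} (h0 : h 0 = 0) (ha : Cp a h) (hb : Cp b h) :
    Cp (Int.gcd a b) h := by
  have : ((Int.gcd a b : ℤ)) ∈ K h h0 := by
    rw [Int.gcd_eq_gcd_ab a b]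
    exact AddSubgroup.add_mem _
      (by simpa [smul_eq_mul, mul_comm] using (K h h0).zsmul_mem ha (Int.gcdA a b))
      (by simpa [smul_eq_mul, mul_comm] using (K h h0).zsmul_mem hb (Int.gcdB a b))
  exact this

/-- decomposition -/
lemma decomp (hn : Cp n h) (h0 : h 0 = 0) :
    ∀ q r : ℤ, h (n * q + r) = h r + (q : ZMod 2) * h n := by
  intro q
  induction q using Int.induction_on with
  | zero => intro r; simp
  | succ i ih =>
      intro r
      have e : n * (i + 1) + r = (n * i + r) + n := by ring
      rw [e, hn, ih r]; push_cast; ring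
  | pred i ih =>
      intro r
      have e : n * (-i - 1) + r = (n * (-i) + r) + -n := by ring
      rw [e, cp_neg h0 hn, ih r, cp_val_neg h0 hn]; push_cast
      linear_combination (h n) * two0

lemma val_eq {p : ℕ} (hP : Cp p h) (h0 : h 0 = 0) (hp0 : 0 < p) (k : ℤ) :
    h k = h (k % p) + ((k / p : ℤ) : ZMod 2) * h p := by
  have := decomp hP h0 (k / p) (k % p)
  rw [Int.mul_ediv_add_emod k p] at this
  exact this




noncomputable local instance : DecidableEq (ℤ → ZMod 2) := fun _ _ => Classical.dec _

/-- translation by `m` (with constant adjustment). -/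
def Tm (m : ℕ) (h : ℤ → ZMod 2) : ℤ → ZMod 2 := fun k => h m + h (k + m)

variable {p : ℕ}

lemma tm_add (a b : ℕ) (h : ℤ → ZMod 2) : Tm a (Tm b h) = Tm (a + b) h := by
  funext k
  show (h b + h (a + b)) + (h b + h (k + a + b)) = h (a + b : ℕ) + h (k + (a + b : ℕ))
  push_cast
  have e1 : (k : ℤ) + a + b = k + (a + b) := by ring
  rw [e1]
  linear_combination (h b) * two0

lemma tm_zero (h0 : h 0 = 0) : Tm 0 h = h := by
  funext k; show h 0 + h (k + 0) = h k; simp [h0]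

lemma tm_p (hP : Cp p h) : Tm p h = h := by
  funext k; show h p + h (k + p) = h k
  rw [hP k]; linear_combination (h p) * two0

lemma tm_add_p (hP : Cp p h) (m : ℕ) : Tm (m + p) h = Tm m h := by
  rw [← tm_add, tm_p hP]

lemma tm_mod (hP : Cp p h) (hp0 : 0 < p) (m : ℕ) : Tm m h = Tm (m % p) h := by
  induction m using Nat.strong_induction_on with
  | _ m ih =>
    rcases lt_or_ge m p with hlt | hge
    · rw [Nat.mod_eq_of_lt hlt]
    · have e : m - p + p = m := Nat.sub_add_cancel hge
      rw [← e, tm_add_p hP, ih (m - p) (by omega), Nat.add_mod_right]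

lemma tm_modeq (hP : Cp p h) (hp0 : 0 < p) {a b : ℕ} (hab : a ≡ b [MOD p]) :
    Tm a h = Tm b h := by
  rw [tm_mod hP hp0 a, tm_mod hP hp0 b, hab]

lemma mod_helper (hp0 : 0 < p) (m : ℕ) : ((p - m % p) % p + m) % p = 0 := by
  rw [Nat.mod_add_mod]
  have h1 : m % p < p := Nat.mod_lt _ hp0
  have h2 : p - m % p + m = p * (1 + m / p) := by
    have := Nat.div_add_mod m p
    have h3 : p * (m / p) + m % p = m := this
    have h4 : p * (1 + m / p) = p + p * (m / p) := by ring
    omega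
  rw [h2, Nat.mul_mod_right]

lemma tm_cancel (hP : Cp p h) (h0 : h 0 = 0) (hp0 : 0 < p) (m : ℕ) :
    Tm ((p - m % p) % p) (Tm m h) = h := by
  rw [tm_add]
  have : Tm ((p - m % p) % p + m) h = Tm 0 h :=
    tm_modeq hP hp0 (by unfold Nat.ModEq; rw [mod_helper hp0 m]; simp)
  rw [this, tm_zero h0]

lemma cp_tm (hP : Cp p h) (m : ℕ) : Cp p (Tm m h) := by
  intro k
  show h m + h (k + p + m) = (h m + h (k + m)) + (h m + h (p + m))
  have e1 : (k : ℤ) + p + m = (k + m) + p := by ring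
  have e2 : (p : ℤ) + m = (m : ℤ) + p := by ring
  rw [e1, e2, hP (k + m), hP m]
  linear_combination (- h (m:ℤ)) * two0

lemma tm_zero_val (m : ℕ) (h : ℤ → ZMod 2) : Tm m h 0 = 0 := by
  show h m + h (0 + m) = 0
  rw [zero_add]; linear_combination (h (m:ℤ)) * two0

lemma cp_p1 (hP : Cp p h) (h0 : h 0 = 0) : Cp p (P1z h) := by
  intro k
  show h (-(k + p)) = h (-k) + h (-p)
  rw [cp_val_neg h0 hP]
  have e : -(k + (p:ℤ)) = -k - p := by ring
  rw [e]
  have := hP (-k - p)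
  have e2 : -k - (p:ℤ) + p = -k := by ring
  rw [e2] at this
  linear_combination -this - h (p:ℤ) * two0

lemma p1_zero_val (h0 : h 0 = 0) : P1z h 0 = 0 := by
  show h (-0) = 0; simpa using h0

lemma p1_invol (h : ℤ → ZMod 2) : P1z (P1z h) = h := by
  funext k; show h (- -k) = h k; rw [neg_neg]

lemma sub_p (hP : Cp p h) (x : ℤ) : h (x - p) = h x + h p := by
  have := hP (x - p)
  have e : x - (p:ℤ) + p = x := by ring
  rw [e] at this
  linear_combination -this - h (p:ℤ) * two0

lemma p1_tm (hP : Cp p h) (h0 : h 0 = 0) {m : ℕ} (hm : m ≤ p) :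
    P1z (Tm m h) = Tm (p - m) (P1z h) := by
  funext k
  show h m + h (-k + m) = h (-((p - m : ℕ) : ℤ)) + h (-(k + ((p - m : ℕ) : ℤ)))
  have ec : ((p - m : ℕ) : ℤ) = (p : ℤ) - m := by
    push_cast [Nat.cast_sub hm]; ring
  rw [ec]
  have e1 : -((p:ℤ) - m) = (m : ℤ) - p := by ring
  have e2 : -(k + ((p:ℤ) - m)) = (-k + m) - p := by ring
  rw [e1, e2, sub_p hP, sub_p hP]
  linear_combination (- h (p:ℤ)) * two0

lemma p2_eq (h0 : h 0 = 0) : P2z h = fun k => h (-1) + h (-k - 1) := by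
  funext k
  show (if k = -1 then h (-1) else h (-1) + h (-k - 1)) = h (-1) + h (-k - 1)
  split
  · next he => subst he; norm_num [h0]
  · rfl

lemma p2_tm (hP : Cp p h) (h0 : h 0 = 0) {m : ℕ} (hm : m ≤ p) :
    P2z (Tm m h) = Tm (p + 1 - m) (P1z h) := by
  rw [p2_eq (tm_zero_val m h)]
  funext k
  show (h m + h (-1 + m)) + (h m + h (-k - 1 + m))
      = h (-((p + 1 - m : ℕ) : ℤ)) + h (-(k + ((p + 1 - m : ℕ) : ℤ)))
  have ec : ((p + 1 - m : ℕ) : ℤ) = (p : ℤ) + 1 - m := by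
    have : m ≤ p + 1 := by omega
    push_cast [Nat.cast_sub this]; ring
  rw [ec]
  have e1 : -((p:ℤ) + 1 - m) = ((m : ℤ) - 1) - p := by ring
  have e2 : -(k + ((p:ℤ) + 1 - m)) = ((-k - 1 + m)) - p := by ring
  have e3 : (-1 : ℤ) + m = (m : ℤ) - 1 := by ring
  rw [e1, e2, e3, sub_p hP, sub_p hP]
  linear_combination (h (m:ℤ) - h (p:ℤ)) * two0


/-- The explicit orbit set. -/
def Orb (p : ℕ) (h : ℤ → ZMod 2) : Set (ℤ → ZMod 2) :=
  {g | ∃ m : ℕ, g = Tm m h ∨ g = Tm m (P1z h)}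

lemma orb_closed_p1 (hP : Cp p h) (h0 : h 0 = 0) (hp0 : 0 < p)
    {g : ℤ → ZMod 2} (hg : g ∈ Orb p h) : P1z g ∈ Orb p h := by
  obtain ⟨m, hm | hm⟩ := hg
  · subst hm
    rw [tm_mod hP hp0, p1_tm hP h0 (le_of_lt (Nat.mod_lt _ hp0))]
    exact ⟨p - m % p, Or.inr rfl⟩
  · subst hm
    rw [tm_mod (cp_p1 hP h0) hp0, p1_tm (cp_p1 hP h0) (p1_zero_val h0) (le_of_lt (Nat.mod_lt _ hp0)),
      p1_invol]
    exact ⟨p - m % p, Or.inl rfl⟩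

lemma orb_closed_p2 (hP : Cp p h) (h0 : h 0 = 0) (hp0 : 0 < p)
    {g : ℤ → ZMod 2} (hg : g ∈ Orb p h) : P2z g ∈ Orb p h := by
  obtain ⟨m, hm | hm⟩ := hg
  · subst hm
    rw [tm_mod hP hp0, p2_tm hP h0 (le_of_lt (Nat.mod_lt _ hp0))]
    exact ⟨p + 1 - m % p, Or.inr rfl⟩
  · subst hm
    rw [tm_mod (cp_p1 hP h0) hp0, p2_tm (cp_p1 hP h0) (p1_zero_val h0) (le_of_lt (Nat.mod_lt _ hp0)),
      p1_invol]
    exact ⟨p + 1 - m % p, Or.inl rfl⟩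

lemma reach_tm (hP : Cp p h) (h0 : h 0 = 0) (hp0 : 0 < p) (m : ℕ) :
    Relation.ReflTransGen VeechStep h (Tm m h) := by
  induction m with
  | zero => rw [tm_zero h0]
  | succ m ih =>
    have hmlt : m % p ≤ p := le_of_lt (Nat.mod_lt _ hp0)
    have s1 : VeechStep (Tm m h) (P1z (Tm m h)) := Or.inl rfl
    have s2 : VeechStep (P1z (Tm m h)) (P2z (P1z (Tm m h))) := Or.inr rfl
    have e : P2z (P1z (Tm m h)) = Tm (m + 1) h := by
      rw [tm_mod hP hp0 m, p1_tm hP h0 hmlt,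
        p2_tm (cp_p1 hP h0) (p1_zero_val h0) (Nat.sub_le p (m % p)), p1_invol]
      have e2 : p + 1 - (p - m % p) = m % p + 1 := by omega
      rw [e2]
      exact tm_modeq hP hp0 ((Nat.mod_modEq m p).add_right 1)
    rw [← e]
    exact (ih.tail s1).tail s2

lemma orb_sub_veech (hP : Cp p h) (h0 : h 0 = 0) (hp0 : 0 < p) :
    Orb p h ⊆ VeechOrbit h := by
  rintro g ⟨m, hm | hm⟩ <;> subst hm
  · exact reach_tm hP h0 hp0 m
  · exact Relation.ReflTransGen.trans
      (Relation.ReflTransGen.single (Or.inl rfl))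
      (reach_tm (cp_p1 hP h0) (p1_zero_val h0) hp0 m)

lemma veech_sub_orb (hP : Cp p h) (h0 : h 0 = 0) (hp0 : 0 < p) :
    VeechOrbit h ⊆ Orb p h := by
  intro g hg
  induction hg with
  | refl => exact ⟨p, Or.inl (tm_p hP).symm⟩
  | tail _ hstep ih =>
    rcases hstep with rfl | rfl
    · exact orb_closed_p1 hP h0 hp0 ih
    · exact orb_closed_p2 hP h0 hp0 ih

lemma veech_eq_orb (hP : Cp p h) (h0 : h 0 = 0) (hp0 : 0 < p) :
    VeechOrbit h = Orb p h :=
  Set.Subset.antisymm (veech_sub_orb hP h0 hp0) (orb_sub_veech hP h0 hp0)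

lemma p2_invol (h0 : h 0 = 0) : P2z (P2z h) = h := by
  rw [p2_eq h0]
  have h0' : (fun k : ℤ => h (-1) + h (-k - 1)) 0 = 0 := by
    show h (-1) + h (-0 - 1) = 0
    norm_num
    linear_combination (h (-1)) * two0
  rw [p2_eq h0']
  funext k
  show (h (-1) + h (-(-1) - 1)) + (h (-1) + h (-(-k - 1) - 1)) = h k
  norm_num [h0]
  linear_combination (h (-1)) * two0

lemma step_symm {a b : ℤ → ZMod 2} (h0 : a 0 = 0) (hs : VeechStep a b) :
    VeechStep b a ∧ b 0 = 0 := by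
  rcases hs with rfl | rfl
  · exact ⟨Or.inl (p1_invol a).symm, p1_zero_val h0⟩
  · refine ⟨Or.inr (p2_invol h0).symm, ?_⟩
    show (if (0:ℤ) = -1 then a (-1) else a (-1) + a (-0 - 1)) = 0
    norm_num [h0]
    linear_combination (a (-1)) * two0

lemma rtg_symm {a b : ℤ → ZMod 2} (h0 : a 0 = 0)
    (hab : Relation.ReflTransGen VeechStep a b) :
    Relation.ReflTransGen VeechStep b a ∧ b 0 = 0 := by
  induction hab with
  | refl => exact ⟨Relation.ReflTransGen.refl, h0⟩
  | tail _ hstep ih =>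
    obtain ⟨hba, hc0⟩ := ih
    obtain ⟨hrev, hd0⟩ := step_symm hc0 hstep
    exact ⟨Relation.ReflTransGen.head hrev hba, hd0⟩

lemma veech_orbit_eq_of_mem {a g : ℤ → ZMod 2} (h0 : a 0 = 0)
    (hg : g ∈ VeechOrbit a) : VeechOrbit g = VeechOrbit a := by
  obtain ⟨hga, _⟩ := rtg_symm h0 hg
  ext x
  exact ⟨fun hx => Relation.ReflTransGen.trans hg hx,
    fun hx => Relation.ReflTransGen.trans hga hx⟩

/-- `Tm d h = h` iff `Cp d h`. -/
lemma tm_fix_iff (d : ℕ) : Tm d h = h ↔ Cp d h := by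
  constructor
  · intro he k
    have := congrFun he k
    simp only [Tm] at this
    linear_combination this - (h (d:ℤ)) * two0
  · intro hc
    funext k
    show h d + h (k + d) = h k
    rw [hc k]
    linear_combination (h (d:ℤ)) * two0

/-- In `Wstar`, no nontrivial small period. -/
lemma no_small_period (hp : p.Prime) (hW : h ∈ Wstar p) {d : ℕ}
    (hd0 : 0 < d) (hdp : d < p) : ¬ Cp d h := by
  intro hc
  obtain ⟨h0, hne, hwp, hnd⟩ := hW
  have hPp : Cp p h := (wp_iff p h).mp hwp
  have hgcd : Cp (Int.gcd (d : ℤ) (p : ℤ)) h := cp_gcd h0 hc hPp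
  have : Int.gcd (d : ℤ) (p : ℤ) = 1 := by
    have : Nat.gcd d p = 1 := Nat.Coprime.gcd_eq_one
      (Nat.Coprime.symm ((Nat.Prime.coprime_iff_not_dvd hp).mpr
        (fun hdvd => absurd (Nat.le_of_dvd hd0 hdvd) (not_le.mpr hdp))))
    simpa [Int.gcd_natCast_natCast] using this
  rw [this] at hgcd
  exact hnd 1 (one_dvd p) (fun h1 => by omega) ((wp_iff 1 h).mpr (by exact_mod_cast hgcd))




lemma no_small_period1 (hp : p.Prime) (hP : Cp p h) (h0 : h 0 = 0) (hn1 : ¬ Cp 1 h)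
    {d : ℕ} (hd0 : 0 < d) (hdp : d < p) : ¬ Cp d h := by
  intro hc
  have hgcd : Cp (Int.gcd (d : ℤ) (p : ℤ)) h := cp_gcd h0 hc hP
  have hg1 : Int.gcd (d : ℤ) (p : ℤ) = 1 := by
    have : Nat.gcd d p = 1 := Nat.Coprime.gcd_eq_one
      (Nat.Coprime.symm ((Nat.Prime.coprime_iff_not_dvd hp).mpr
        (fun hdvd => absurd (Nat.le_of_dvd hd0 hdvd) (not_le.mpr hdp))))
    simpa [Int.gcd_natCast_natCast] using this
  rw [hg1] at hgcd
  exact hn1 (by exact_mod_cast hgcd)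

lemma tm_inj (hp : p.Prime) (hP : Cp p h) (h0 : h 0 = 0) (hn1 : ¬ Cp 1 h)
    {a b : ℕ} (ha : a < p) (hb : b < p) (he : Tm a h = Tm b h) : a = b := by
  have hp0 : 0 < p := hp.pos
  set c := (p - b % p) % p with hc
  have h1 : Tm (c + a) h = h := by
    rw [← tm_add, he, tm_cancel hP h0 hp0]
  have h2 : (c + b) % p = 0 := mod_helper hp0 b
  have h3 : Tm ((c + a) % p) h = h := by rw [← tm_mod hP hp0]; exact h1
  by_cases hd : (c + a) % p = 0
  · have d1 : (p:ℤ) ∣ ((c : ℤ) + a) := by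
      exact_mod_cast (Nat.dvd_of_mod_eq_zero hd).natCast (α := ℤ)
    have d2 : (p:ℤ) ∣ ((c : ℤ) + b) := by
      exact_mod_cast (Nat.dvd_of_mod_eq_zero h2).natCast (α := ℤ)
    have d3 : (p:ℤ) ∣ ((a : ℤ) - b) := by
      have := dvd_sub d1 d2
      simpa using this
    have : ((a : ℤ) - b) = 0 := Int.eq_zero_of_abs_lt_dvd d3 (by
      rw [abs_lt]; constructor <;> [omega; omega])
    omega
  · exfalso
    have hdp : (c + a) % p < p := Nat.mod_lt _ hp0
    exact no_small_period1 hp hP h0 hn1 (Nat.pos_of_ne_zero hd) hdp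
      ((tm_fix_iff _).mp h3)


/-- unpack Wstar -/
lemma wstar_cp (hW : h ∈ Wstar p) : Cp p h := (wp_iff p h).mp hW.2.2.1
lemma wstar_zero (hW : h ∈ Wstar p) : h 0 = 0 := hW.1
lemma wstar_ne (hW : h ∈ Wstar p) : h ≠ 0 := hW.2.1
lemma wstar_n1 (hp : p.Prime) (hW : h ∈ Wstar p) : ¬ Cp 1 h := by
  intro hc
  exact hW.2.2.2 1 (one_dvd p) (by have := hp.two_le; omega)
    ((wp_iff 1 h).mpr (by exact_mod_cast hc))

lemma cp_one_of_tm (h0 : h 0 = 0) {m : ℕ} (hc : Cp 1 (Tm m h)) : Cp 1 h := by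
  have key : ∀ x : ℤ, h (x + 1) = h x + (h m + h (m + 1)) := by
    intro x
    have := hc (x - m)
    simp only [Tm] at this
    push_cast at this
    have e1 : x - m + 1 + m = x + 1 := by ring
    have e2 : x - m + m = x := by ring
    have e3 : (1 : ℤ) + m = (m : ℤ) + 1 := by ring
    rw [e1, e2, e3] at this
    linear_combination this
  intro k
  have h1 := key k
  have h2 := key 0
  simp only [h0, zero_add] at h2
  rw [h1, h2]

lemma cp_one_of_p1 (h0 : h 0 = 0) (hc : Cp 1 (P1z h)) : Cp 1 h := by
  have key : ∀ x : ℤ, h (x + 1) = h x + h (-1) := by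
    intro x
    have := hc (-(x + 1))
    simp only [P1z] at this
    have e1 : -(-(x+1) + 1) = x := by ring
    have e2 : -(-(x+1)) = x + 1 := by ring
    rw [e1, e2] at this
    linear_combination -this - (h (-1)) * two0
  intro k
  have h1 := key k
  have h2 := key 0
  simp only [h0, zero_add] at h2
  rw [h1, h2]

lemma tm_ne_zero (h0 : h 0 = 0) (hne : h ≠ 0) (m : ℕ) : Tm m h ≠ 0 := by
  intro hz
  apply hne
  have hconst : ∀ x : ℤ, h x = h m := by
    intro x
    have := congrFun hz (x - m)
    simp only [Tm, Pi.zero_apply] at this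
    have e : x - m + m = x := by ring
    rw [e] at this
    linear_combination this - (h (m:ℤ)) * two0
  have hm0 : h (m:ℤ) = 0 := by rw [← hconst 0]; exact h0
  funext x
  show h x = 0
  rw [hconst x, hm0]

lemma tm_mem_wstar (hp : p.Prime) (hW : h ∈ Wstar p) (m : ℕ) : Tm m h ∈ Wstar p := by
  obtain ⟨h0, hne, hwp, hnd⟩ := hW
  have hP : Cp p h := (wp_iff p h).mp hwp
  refine ⟨tm_zero_val m h, tm_ne_zero h0 hne m, (wp_iff p _).mpr (cp_tm hP m), ?_⟩
  intro m' hdvd hne' hwp'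
  have hm1 : m' = 1 := by
    rcases (Nat.Prime.eq_one_or_self_of_dvd hp m' hdvd) with h1 | h1
    · exact h1
    · exact absurd h1 hne'
  subst hm1
  have : Cp 1 h := cp_one_of_tm h0 ((wp_iff 1 _).mp hwp')
  exact wstar_n1 hp ⟨h0, hne, hwp, hnd⟩ this

lemma p1_mem_wstar (hp : p.Prime) (hW : h ∈ Wstar p) : P1z h ∈ Wstar p := by
  obtain ⟨h0, hne, hwp, hnd⟩ := hW
  have hP : Cp p h := (wp_iff p h).mp hwp
  refine ⟨p1_zero_val h0, ?_, (wp_iff p _).mpr (cp_p1 hP h0), ?_⟩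
  · intro hz
    apply hne; funext x
    have := congrFun hz (-x)
    simp only [P1z, neg_neg] at this
    exact this
  · intro m' hdvd hne' hwp'
    have hm1 : m' = 1 := by
      rcases (Nat.Prime.eq_one_or_self_of_dvd hp m' hdvd) with h1 | h1
      · exact h1
      · exact absurd h1 hne'
    subst hm1
    exact wstar_n1 hp ⟨h0, hne, hwp, hnd⟩ (cp_one_of_p1 h0 ((wp_iff 1 _).mp hwp'))

/-- symmetry predicate -/
def IsSym (p : ℕ) (h : ℤ → ZMod 2) : Prop := ∃ s : ℕ, P1z h = Tm s h


/-- Orbit as a finset. -/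
noncomputable def OrbF (p : ℕ) (h : ℤ → ZMod 2) : Finset (ℤ → ZMod 2) :=
  ((Finset.range p).image (fun m => Tm m h)) ∪ ((Finset.range p).image (fun m => Tm m (P1z h)))

lemma orbF_coe (hP : Cp p h) (h0 : h 0 = 0) (hp0 : 0 < p) :
    (OrbF p h : Set (ℤ → ZMod 2)) = Orb p h := by
  classical
  ext g
  simp only [OrbF, Finset.coe_union, Finset.coe_image, Finset.coe_range, Set.mem_union,
    Set.mem_image, Set.mem_Iio, Orb, Set.mem_setOf_eq]
  constructor
  · rintro (⟨m, _, rfl⟩ | ⟨m, _, rfl⟩)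
    · exact ⟨m, Or.inl rfl⟩
    · exact ⟨m, Or.inr rfl⟩
  · rintro ⟨m, rfl | rfl⟩
    · exact Or.inl ⟨m % p, Nat.mod_lt _ hp0, (tm_mod hP hp0 m).symm⟩
    · exact Or.inr ⟨m % p, Nat.mod_lt _ hp0, (tm_mod (cp_p1 hP h0) hp0 m).symm⟩

lemma mem_orb_self (hP : Cp p h) : h ∈ Orb p h := ⟨p, Or.inl (tm_p hP).symm⟩

lemma card_image_tm (hp : p.Prime) (hP : Cp p h) (h0 : h 0 = 0) (hn1 : ¬ Cp 1 h) :
    ((Finset.range p).image (fun m => Tm m h)).card = p := by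
  classical
  rw [Finset.card_image_of_injOn, Finset.card_range]
  intro a ha b hb he
  simp only [Finset.coe_range, Set.mem_Iio] at ha hb
  exact tm_inj hp hP h0 hn1 ha hb he

lemma orbF_card_sym (hp : p.Prime) (hP : Cp p h) (h0 : h 0 = 0) (hn1 : ¬ Cp 1 h)
    (hsym : IsSym p h) : (OrbF p h).card = p := by
  classical
  have hp0 := hp.pos
  obtain ⟨s, hs⟩ := hsym
  have hsub : (Finset.range p).image (fun m => Tm m (P1z h))
      ⊆ (Finset.range p).image (fun m => Tm m h) := by
    intro g hg
    simp only [Finset.mem_image, Finset.mem_range] at hg ⊢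
    obtain ⟨j, hj, rfl⟩ := hg
    exact ⟨(j + s) % p, Nat.mod_lt _ hp0, by
      rw [← tm_mod hP hp0, ← tm_add, ← hs]⟩
  unfold OrbF
  rw [Finset.union_eq_left.mpr hsub]
  exact card_image_tm hp hP h0 hn1

lemma orbF_card_nonsym (hp : p.Prime) (hP : Cp p h) (h0 : h 0 = 0) (hn1 : ¬ Cp 1 h)
    (hns : ¬ IsSym p h) : (OrbF p h).card = 2 * p := by
  classical
  have hp0 := hp.pos
  have hP' : Cp p (P1z h) := cp_p1 hP h0
  have h0' : (P1z h) 0 = 0 := p1_zero_val h0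
  have hn1' : ¬ Cp 1 (P1z h) := fun hc => hn1 (cp_one_of_p1 h0 hc)
  have hdisj : Disjoint ((Finset.range p).image (fun m => Tm m h))
      ((Finset.range p).image (fun m => Tm m (P1z h))) := by
    rw [Finset.disjoint_left]
    intro g hg1 hg2
    simp only [Finset.mem_image, Finset.mem_range] at hg1 hg2
    obtain ⟨a, ha, rfl⟩ := hg1
    obtain ⟨b, hb, hba⟩ := hg2
    apply hns
    have : Tm ((p - b % p) % p) (Tm b (P1z h)) = P1z h := tm_cancel hP' h0' hp0 b
    rw [hba, tm_add] at this
    exact ⟨(p - b % p) % p + a, this.symm⟩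
  unfold OrbF
  rw [Finset.card_union_of_disjoint hdisj, card_image_tm hp hP h0 hn1,
    card_image_tm hp hP' h0' hn1']
  ring

lemma nat_card_orbit (hP : Cp p h) (h0 : h 0 = 0) (hp0 : 0 < p) :
    Nat.card (VeechOrbit h) = (OrbF p h).card := by
  rw [veech_eq_orb hP h0 hp0, ← orbF_coe hP h0 hp0]
  rw [Nat.card_coe_set_eq, Set.ncard_coe_finset]

lemma sym_transfer (hp : p.Prime) (hW : h ∈ Wstar p) (hsym : IsSym p h)
    {g : ℤ → ZMod 2} (hg : g ∈ Orb p h) : g ∈ Wstar p ∧ IsSym p g := by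
  have hp0 := hp.pos
  have hP := wstar_cp hW
  have h0 := wstar_zero hW
  obtain ⟨s, hs⟩ := hsym
  have hcase : ∃ n : ℕ, g = Tm n h := by
    obtain ⟨m, rfl | rfl⟩ := hg
    · exact ⟨m, rfl⟩
    · exact ⟨m + s, by rw [hs, tm_add]⟩
  obtain ⟨n, rfl⟩ := hcase
  refine ⟨tm_mem_wstar hp hW n, ?_⟩
  have hn' : n % p ≤ p := le_of_lt (Nat.mod_lt _ hp0)
  rw [tm_mod hP hp0 n]
  set n' := n % p
  refine ⟨p - n' + s + (p - n' % p) % p, ?_⟩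
  rw [p1_tm hP h0 hn', hs, tm_add, tm_add]
  refine tm_modeq hP hp0 ?_
  have hd : p ∣ ((p - n' % p) % p + n') := Nat.dvd_of_mod_eq_zero (mod_helper hp0 n')
  have he : p - n' + s + (p - n' % p) % p + n' = (p - n' + s) + ((p - n' % p) % p + n') := by
    omega
  rw [he]
  exact (Nat.modEq_iff_dvd' (Nat.le_add_right _ _)).mpr (by simpa using hd)

lemma nonsym_transfer (hp : p.Prime) (hW : h ∈ Wstar p) (hns : ¬ IsSym p h)
    {g : ℤ → ZMod 2} (hg : g ∈ Orb p h) : g ∈ Wstar p ∧ ¬ IsSym p g := by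
  have hp0 := hp.pos
  have hP := wstar_cp hW
  have h0 := wstar_zero hW
  have hP' : Cp p (P1z h) := cp_p1 hP h0
  have h0' : (P1z h) 0 = 0 := p1_zero_val h0
  obtain ⟨n, rfl | rfl⟩ := hg
  · refine ⟨tm_mem_wstar hp hW n, ?_⟩
    rintro ⟨t, ht⟩
    apply hns
    rw [tm_mod hP hp0 n] at ht
    set n' := n % p with hn'def
    have hn' : n' ≤ p := le_of_lt (Nat.mod_lt _ hp0)
    rw [p1_tm hP h0 hn', tm_add] at ht
    -- ht : Tm (p - n') (P1z h) = Tm (t + n') h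
    have hcan : Tm ((p - (p - n') % p) % p) (Tm (p - n') (P1z h)) = P1z h :=
      tm_cancel hP' h0' hp0 (p - n')
    rw [ht, tm_add] at hcan
    exact ⟨_, hcan.symm⟩
  · refine ⟨tm_mem_wstar hp (p1_mem_wstar hp hW) n, ?_⟩
    rintro ⟨t, ht⟩
    apply hns
    rw [tm_mod hP' hp0 n] at ht
    set n' := n % p with hn'def
    have hn' : n' ≤ p := le_of_lt (Nat.mod_lt _ hp0)
    rw [p1_tm hP' h0' hn', p1_invol, tm_add] at ht
    -- ht : Tm (p - n') h = Tm (t + n') (P1z h)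
    have hcan : Tm ((p - (p - n') % p) % p) (Tm (p - n') h) = h := tm_cancel hP h0 hp0 (p - n')
    rw [ht, tm_add] at hcan
    -- hcan : Tm w (P1z h) = h
    set w := (p - (p - n') % p) % p + (t + n')
    have hw : Tm (w % p) (P1z h) = h := by rw [← tm_mod hP' hp0]; exact hcan
    have hwle : w % p ≤ p := le_of_lt (Nat.mod_lt _ hp0)
    have := congrArg P1z hw
    rw [p1_tm hP' h0' hwle, p1_invol] at this
    exact ⟨_, this.symm⟩

lemma orbit_eq_of_mem_orb (hp : p.Prime) (hP : Cp p h) (h0 : h 0 = 0)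
    {g : ℤ → ZMod 2} (hg : g ∈ Orb p h) : VeechOrbit g = VeechOrbit h :=
  veech_orbit_eq_of_mem h0 (orb_sub_veech hP h0 hp.pos hg)


/-- value lookup -/
def vv (p : ℕ) (v : Fin p → ZMod 2) (j : ℕ) : ZMod 2 :=
  if h : j - 1 < p ∧ j ≠ 0 then v ⟨j - 1, h.1⟩ else 0

/-- reconstruction of a weakly periodic sequence from its defining vector -/
def sig (p : ℕ) (v : Fin p → ZMod 2) : ℤ → ZMod 2 := fun k =>
  vv p v (k % p).toNat + ((k / p : ℤ) : ZMod 2) * vv p v p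

lemma vv_zero (p : ℕ) (v : Fin p → ZMod 2) : vv p v 0 = 0 := by simp [vv]

lemma sig_apply_p (hp0 : 0 < p) (v : Fin p → ZMod 2) : sig p v p = vv p v p := by
  unfold sig
  have h1 : ((p : ℤ) % p) = 0 := (by simp)
  have h2 : ((p : ℤ) / p) = 1 := Int.ediv_self (by exact_mod_cast hp0.ne')
  rw [h1, h2]
  simp [vv_zero]

lemma sig_cp (hp0 : 0 < p) (v : Fin p → ZMod 2) : Cp p (sig p v) := by
  intro k
  rw [sig_apply_p hp0 v]
  show vv p v ((k + p) % p).toNat + (((k + p) / p : ℤ) : ZMod 2) * vv p v p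
    = (vv p v (k % p).toNat + ((k / p : ℤ) : ZMod 2) * vv p v p) + vv p v p
  have h1 : (k + (p:ℤ)) % p = k % p := by
    have : k + (p:ℤ) = k + (p:ℤ) * 1 := by ring
    rw [this, Int.add_mul_emod_self_left]
  have h2 : (k + (p:ℤ)) / p = k / p + 1 := by
    have : k + (p:ℤ) = k + 1 * (p:ℤ) := by ring
    rw [this, Int.add_mul_ediv_right _ _ (by exact_mod_cast hp0.ne' : (p:ℤ) ≠ 0)]
  rw [h1, h2]
  push_cast
  ring

lemma sig_zero (hp0 : 0 < p) (v : Fin p → ZMod 2) : sig p v 0 = 0 := by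
  unfold sig
  simp [vv_zero]

lemma sig_val (hp0 : 0 < p) (v : Fin p → ZMod 2) (i : Fin p) :
    sig p v ((i : ℕ) + 1) = v i := by
  unfold sig
  rcases eq_or_lt_of_le (Nat.succ_le_of_lt i.2) with he | hlt
  · -- i + 1 = p
    have h1 : ((i:ℕ):ℤ) + 1 = (p : ℤ) := by omega
    push_cast
    rw [h1]
    have h2 : ((p : ℤ) % p) = 0 := (by simp)
    have h3 : ((p : ℤ) / p) = 1 := Int.ediv_self (by exact_mod_cast hp0.ne')
    rw [h2, h3]
    simp only [Int.toNat_zero, vv_zero, zero_add, Int.cast_one, one_mul]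
    unfold vv
    have hcond : p - 1 < p ∧ p ≠ 0 := ⟨by omega, by omega⟩
    rw [dif_pos hcond]
    congr 1
    apply Fin.ext
    show p - 1 = (i : ℕ)
    omega
  · -- i + 1 < p
    have hnn : (0:ℤ) ≤ ((i:ℕ) + 1 : ℤ) := by positivity
    have hlt' : ((i:ℕ) + 1 : ℤ) < (p : ℤ) := by exact_mod_cast hlt
    have h1 : (((i:ℕ) + 1 : ℤ)) % p = ((i:ℕ) + 1 : ℤ) := Int.emod_eq_of_lt hnn hlt'
    have h2 : (((i:ℕ) + 1 : ℤ)) / p = 0 := Int.ediv_eq_zero_of_lt hnn hlt'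
    push_cast at h1 h2 ⊢
    rw [h1, h2]
    simp only [Int.cast_zero, zero_mul, add_zero]
    have h3 : ((i:ℤ) + 1).toNat = (i:ℕ) + 1 := by omega
    rw [h3]
    unfold vv
    have hcond : (i:ℕ) + 1 - 1 < p ∧ (i:ℕ) + 1 ≠ 0 := ⟨by omega, by omega⟩
    rw [dif_pos hcond]
    rfl

lemma sig_eq_self (hP : Cp p h) (h0 : h 0 = 0) (hp0 : 0 < p) :
    sig p (fun i => h ((i : ℕ) + 1)) = h := by
  funext k
  set v : Fin p → ZMod 2 := fun i => h ((i : ℕ) + 1) with hv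
  have hval := val_eq hP h0 hp0 k
  have hr0 : (0:ℤ) ≤ k % p := Int.emod_nonneg k (by exact_mod_cast hp0.ne')
  have hrp : k % p < p := Int.emod_lt_of_pos k (by exact_mod_cast hp0)
  have hvvp : vv p v p = h p := by
    unfold vv
    have hcond : p - 1 < p ∧ p ≠ 0 := ⟨by omega, by omega⟩
    rw [dif_pos hcond, hv]
    show h (((p - 1 : ℕ) : ℤ) + 1) = h p
    congr 1
    omega
  have hvvr : vv p v (k % p).toNat = h (k % p) := by
    unfold vv
    by_cases hz : (k % p).toNat = 0
    · rw [dif_neg (by omega)]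
      have : k % p = 0 := by omega
      rw [this, h0]
    · have hcond : (k % p).toNat - 1 < p ∧ (k % p).toNat ≠ 0 := ⟨by omega, hz⟩
      rw [dif_pos hcond, hv]
      show h ((((k % p).toNat - 1 : ℕ) : ℤ) + 1) = h (k % p)
      congr 1
      omega
  show vv p v (k % p).toNat + ((k / p : ℤ) : ZMod 2) * vv p v p = h k
  rw [hvvr, hvvp, ← hval]

lemma sig_inj (hp0 : 0 < p) : Function.Injective (sig p) := by
  intro v w hvw
  funext i
  rw [← sig_val hp0 v i, ← sig_val hp0 w i, hvw]

/-- the "sawtooth" element of `W_1` -/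
def zig : ℤ → ZMod 2 := fun k => (k : ZMod 2)

lemma zig_cp (n : ℤ) : Cp n zig := by intro k; unfold zig; push_cast; ring

lemma zig_zero : zig 0 = 0 := by unfold zig; norm_num

lemma zmod2_cases (x : ZMod 2) : x = 0 ∨ x = 1 := by
  have : ∀ y : ZMod 2, y = 0 ∨ y = 1 := by decide
  exact this x

lemma char_not_wstar (hp : p.Prime) (hP : Cp p h) (h0 : h 0 = 0) :
    h ∉ Wstar p ↔ h = 0 ∨ h = zig := by
  constructor
  · intro hn
    by_cases hz : h = 0
    · exact Or.inl hz
    · right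
      unfold Wstar at hn
      simp only [Set.mem_setOf_eq, not_and] at hn
      have := hn h0 hz ((wp_iff p h).mpr hP)
      push_neg at this
      obtain ⟨m, hdvd, hne, hwp⟩ := this
      have hm1 : m = 1 := by
        rcases hp.eq_one_or_self_of_dvd m hdvd with h1 | h1
        · exact h1
        · exact absurd h1 hne
      subst hm1
      have hc1 : Cp 1 h := (wp_iff 1 h).mp hwp
      have hform : ∀ k : ℤ, h k = (k : ZMod 2) * h 1 := by
        intro k
        have := decomp (n := 1) (by exact_mod_cast hc1) h0 k 0
        simpa [h0] using this
      rcases zmod2_cases (h 1) with h1 | h1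
      · exfalso; apply hz; funext k; rw [hform k, h1]; simp
      · funext k; rw [hform k, h1, mul_one]; rfl
  · rintro (rfl | rfl)
    · intro hw; exact hw.2.1 rfl
    · intro hw
      exact hw.2.2.2 1 (one_dvd p) (by have := hp.one_lt; omega)
        ((wp_iff 1 zig).mpr (by exact_mod_cast zig_cp 1))

open Classical in
/-- `Wstar p` as a finset -/
noncomputable def WSF (p : ℕ) : Finset (ℤ → ZMod 2) :=
  ((Finset.univ : Finset (Fin p → ZMod 2)).image (sig p)).filter (fun h => h ∈ Wstar p)

lemma wsf_coe (hp : p.Prime) : (WSF p : Set (ℤ → ZMod 2)) = Wstar p := by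
  classical
  ext g
  simp only [WSF, Finset.coe_filter, Set.mem_setOf_eq, Finset.mem_image, Finset.mem_univ,
    true_and]
  constructor
  · rintro ⟨_, hg⟩; exact hg
  · intro hg
    exact ⟨⟨fun i => g ((i : ℕ) + 1), sig_eq_self (wstar_cp hg) (wstar_zero hg) hp.pos⟩, hg⟩

lemma mem_wsf (hp : p.Prime) {g : ℤ → ZMod 2} : g ∈ WSF p ↔ g ∈ Wstar p := by
  rw [← Finset.mem_coe, wsf_coe hp]

lemma zero_mem_image (hp0 : 0 < p) :
    (0 : ℤ → ZMod 2) ∈ (Finset.univ : Finset (Fin p → ZMod 2)).image (sig p) := by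
  classical
  rw [Finset.mem_image]
  exact ⟨fun i => (0 : ℤ → ZMod 2) ((i:ℕ) + 1),  ⟨Finset.mem_univ _,
    sig_eq_self (fun k => by simp) rfl hp0⟩⟩

lemma zig_mem_image (hp0 : 0 < p) :
    zig ∈ (Finset.univ : Finset (Fin p → ZMod 2)).image (sig p) := by
  classical
  rw [Finset.mem_image]
  exact ⟨fun i => zig ((i:ℕ) + 1), ⟨Finset.mem_univ _,
    sig_eq_self (zig_cp p) zig_zero hp0⟩⟩

lemma zig_ne_zero : zig ≠ 0 := by
  intro hz
  have := congrFun hz 1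
  simp [zig] at this

lemma wsf_card (hp : p.Prime) : (WSF p).card = 2 ^ p - 2 := by
  classical
  have hp0 := hp.pos
  have himg : ((Finset.univ : Finset (Fin p → ZMod 2)).image (sig p)).card = 2 ^ p := by
    rw [Finset.card_image_of_injective _ (sig_inj hp0), Finset.card_univ]
    simp [Fintype.card_fun]
  have hset : WSF p = ((Finset.univ : Finset (Fin p → ZMod 2)).image (sig p))
      \ {0, zig} := by
    ext g
    simp only [WSF, Finset.mem_filter, Finset.mem_sdiff, Finset.mem_insert,
      Finset.mem_singleton, not_or]
    constructor
    · rintro ⟨hgi, hgw⟩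
      refine ⟨hgi, ?_, ?_⟩
      · rintro rfl; exact hgw.2.1 rfl
      · rintro rfl
        exact hgw.2.2.2 1 (one_dvd p) (by have := hp.one_lt; omega)
          ((wp_iff 1 zig).mpr (by exact_mod_cast zig_cp 1))
    · rintro ⟨hgi, hg0, hgz⟩
      refine ⟨hgi, ?_⟩
      obtain ⟨v, _, rfl⟩ := Finset.mem_image.mp hgi
      by_contra hnw
      rcases (char_not_wstar hp (sig_cp hp0 v) (sig_zero hp0 v)).mp hnw with h1 | h1
      · exact hg0 h1
      · exact hgz h1
  rw [hset, Finset.card_sdiff_of_subset]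
  · rw [himg]
    congr 1
    rw [Finset.card_insert_of_notMem (by simpa using zig_ne_zero.symm), Finset.card_singleton]
  · intro x hx
    simp only [Finset.mem_insert, Finset.mem_singleton] at hx
    rcases hx with rfl | rfl
    · exact zero_mem_image hp0
    · exact zig_mem_image hp0


/-- parametrization of symmetric vectors -/
def tau (p : ℕ) (x : (Fin ((p-1)/2) → ZMod 2) × ZMod 2) : Fin p → ZMod 2 := fun i =>
  if h1 : (i:ℕ) < (p-1)/2 then x.1 ⟨i, h1⟩
  else if (i:ℕ) = p - 1 then x.2
  else if h3 : p - 2 - (i:ℕ) < (p-1)/2 then x.1 ⟨p - 2 - (i:ℕ), h3⟩ + x.2 else 0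

lemma tau_last (hp3 : 3 ≤ p) (x : (Fin ((p-1)/2) → ZMod 2) × ZMod 2) :
    tau p x ⟨p - 1, by omega⟩ = x.2 := by
  unfold tau
  rw [dif_neg (show ¬(p - 1 < (p-1)/2) by omega), if_pos (show p - 1 = p - 1 from rfl)]

lemma tau_first (hp3 : 3 ≤ p) (x : (Fin ((p-1)/2) → ZMod 2) × ZMod 2)
    (j : Fin ((p-1)/2)) :
    tau p x ⟨(j:ℕ), by have := j.isLt; omega⟩ = x.1 j := by
  unfold tau
  rw [dif_pos (show (j:ℕ) < (p-1)/2 from j.isLt)]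

lemma tau_inj (hp3 : 3 ≤ p) : Function.Injective (tau p) := by
  intro x y hxy
  have hx1 : ∀ j : Fin ((p-1)/2), x.1 j = y.1 j := by
    intro j
    have := congrFun hxy ⟨(j:ℕ), by have := j.isLt; omega⟩
    rw [tau_first hp3 x j, tau_first hp3 y j] at this
    exact this
  have hx2 : x.2 = y.2 := by
    have := congrFun hxy ⟨p - 1, by omega⟩
    rw [tau_last hp3 x, tau_last hp3 y] at this
    exact this
  ext j
  · exact hx1 j
  · exact hx2

lemma tau_vcond (hodd : Odd p) (hp3 : 3 ≤ p) (x : (Fin ((p-1)/2) → ZMod 2) × ZMod 2)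
    {i : ℕ} (hi : i ≤ p - 2) :
    tau p x ⟨p - 2 - i, by omega⟩ = tau p x ⟨i, by omega⟩ + tau p x ⟨p - 1, by omega⟩ := by
  obtain ⟨d, hd⟩ := hodd
  have hdd : (p - 1) / 2 = d := by omega
  rw [tau_last hp3 x]
  rcases lt_or_ge i ((p-1)/2) with h1 | h1
  · -- i < d ; p-2-i ≥ d
    have e1 : tau p x ⟨i, by omega⟩ = x.1 ⟨i, h1⟩ := by
      unfold tau; rw [dif_pos (show i < (p-1)/2 from h1)]
    have e2 : tau p x ⟨p - 2 - i, by omega⟩ = x.1 ⟨p - 2 - (p - 2 - i), by omega⟩ + x.2 := by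
      unfold tau
      rw [dif_neg (show ¬(p - 2 - i < (p-1)/2) by omega),
        if_neg (show ¬(p - 2 - i = p - 1) by omega),
        dif_pos (show p - 2 - (p - 2 - i) < (p-1)/2 by omega)]
    have eidx : (⟨p - 2 - (p - 2 - i), by omega⟩ : Fin ((p-1)/2)) = ⟨i, h1⟩ :=
      Fin.ext (by show p - 2 - (p - 2 - i) = i; omega)
    rw [e1, e2, eidx]
  · -- i ≥ d, i ≤ p - 2 so p-2-i < d
    have e1 : tau p x ⟨i, by omega⟩ = x.1 ⟨p - 2 - i, by omega⟩ + x.2 := by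
      unfold tau
      rw [dif_neg (show ¬(i < (p-1)/2) by omega),
        if_neg (show ¬(i = p - 1) by omega),
        dif_pos (show p - 2 - i < (p-1)/2 by omega)]
    have e2 : tau p x ⟨p - 2 - i, by omega⟩ = x.1 ⟨p - 2 - i, by omega⟩ := by
      unfold tau; rw [dif_pos (show p - 2 - i < (p-1)/2 by omega)]
    rw [e1, e2]
    rw [add_assoc, z2, add_zero]

lemma symm_iff_p1 (hP : Cp p h) (h0 : h 0 = 0) :
    P1z h = h ↔ ∀ j : ℤ, h ((p:ℤ) - j) = h j + h (p:ℤ) := by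
  constructor
  · intro hs j
    have h1 : ((p:ℤ) - j) = -j + p := by ring
    rw [h1, hP (-j)]
    have := congrFun hs j
    simp only [P1z] at this
    rw [this]
  · intro hs
    funext k
    show h (-k) = h k
    have h1 : -k = ((p:ℤ) - k) - p := by ring
    rw [h1, sub_p hP, hs k]
    linear_combination (h (p:ℤ)) * two0

/-- `sig p v` at `p` equals the last coordinate. -/
lemma sig_val_p (hp0 : 0 < p) (v : Fin p → ZMod 2) :
    sig p v (p:ℤ) = v ⟨p - 1, by omega⟩ := by
  rw [sig_apply_p hp0]
  unfold vv
  rw [dif_pos ⟨by omega, by omega⟩]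

lemma sig_tau_symm (hodd : Odd p) (hp3 : 3 ≤ p) (x : (Fin ((p-1)/2) → ZMod 2) × ZMod 2) :
    P1z (sig p (tau p x)) = sig p (tau p x) := by
  have hp0 : 0 < p := by omega
  set v := tau p x with hv
  set g := sig p v with hg
  have hP : Cp p g := sig_cp hp0 v
  have h0 : g 0 = 0 := sig_zero hp0 v
  rw [symm_iff_p1 hP h0]
  -- first prove it for r ∈ [0, p)
  have base : ∀ r : ℤ, 0 ≤ r → r < p → g ((p:ℤ) - r) = g r + g (p:ℤ) := by
    intro r hr0 hrp
    by_cases hr : r = 0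
    · subst hr; simp [h0]
    · -- r ∈ [1, p-1]
      have hi1 : g r = v ⟨r.toNat - 1, by omega⟩ := by
        have := sig_val hp0 v ⟨r.toNat - 1, by omega⟩
        have e : (((r.toNat - 1 : ℕ) : ℤ)) + 1 = r := by omega
        rw [e] at this
        exact this
      have hi2 : g ((p:ℤ) - r) = v ⟨p - r.toNat - 1, by omega⟩ := by
        have := sig_val hp0 v ⟨p - r.toNat - 1, by omega⟩
        have e : (((p - r.toNat - 1 : ℕ) : ℤ)) + 1 = (p:ℤ) - r := by omega
        rw [e] at this
        exact this
      have hi3 : g (p:ℤ) = v ⟨p - 1, by omega⟩ := sig_val_p hp0 v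
      rw [hi1, hi2, hi3, hv]
      have := tau_vcond hodd hp3 x (i := r.toNat - 1) (by omega)
      have e1 : (⟨p - 2 - (r.toNat - 1), by omega⟩ : Fin p) = ⟨p - r.toNat - 1, by omega⟩ :=
        Fin.ext (by show p - 2 - (r.toNat - 1) = p - r.toNat - 1; omega)
      rw [e1] at this
      exact this
  -- extend to all of ℤ
  intro j
  have hdec := decomp hP h0 (-(j / p)) ((p:ℤ) - j % p)
  have e1 : (p:ℤ) * (-(j / p)) + ((p:ℤ) - j % p) = (p:ℤ) - j := by
    have := Int.mul_ediv_add_emod j p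
    linarith
  rw [e1] at hdec
  have hr0 : (0:ℤ) ≤ j % p := Int.emod_nonneg j (by exact_mod_cast hp0.ne')
  have hrp : j % p < p := Int.emod_lt_of_pos j (by exact_mod_cast hp0)
  have hbase := base (j % p) hr0 hrp
  have hval := val_eq hP h0 hp0 j
  rw [hdec, hbase, hval]
  push_cast
  linear_combination (-(Int.cast (j / (p:ℤ)) : ZMod 2)) * g (p:ℤ) * two0

lemma symm_mem_tau_image (hodd : Odd p) (hp3 : 3 ≤ p) (hP : Cp p h) (h0 : h 0 = 0)
    (hs : P1z h = h) : ∃ x, sig p (tau p x) = h := by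
  have hp0 : 0 < p := by omega
  refine ⟨(fun j => h ((j:ℕ) + 1), h (p:ℤ)), ?_⟩
  have hv : tau p (fun j => h ((j:ℕ) + 1), h (p:ℤ)) = fun i : Fin p => h ((i:ℕ) + 1) := by
    funext i
    have hsym := (symm_iff_p1 hP h0).mp hs
    unfold tau
    by_cases h1 : (i:ℕ) < (p-1)/2
    · rw [dif_pos h1]
    · rw [dif_neg h1]
      by_cases h2 : (i:ℕ) = p - 1
      · rw [if_pos h2]
        show h (p:ℤ) = h ((i:ℕ) + 1)
        congr 1
        omega
      · rw [if_neg h2, dif_pos (by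
          obtain ⟨d, hd⟩ := hodd
          have hip := i.isLt
          show p - 2 - (i:ℕ) < (p-1)/2
          omega)]
        show h (((p - 2 - (i:ℕ) : ℕ):ℤ) + 1) + h (p:ℤ) = h ((i:ℕ) + 1)
        have := hsym ((i:ℕ) + 1)
        have e : ((p - 2 - (i:ℕ) : ℕ):ℤ) + 1 = (p:ℤ) - ((i:ℕ) + 1) := by
          have : (i:ℕ) < p := i.2
          omega
        rw [e, this]
        linear_combination (h (p:ℤ)) * two0
  rw [hv]
  exact sig_eq_self hP h0 hp0


open Classical in
/-- the symmetric elements of `Wstar p` (fixed points of `P1`) as a finset -/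
noncomputable def Fix0F (p : ℕ) : Finset (ℤ → ZMod 2) :=
  ((Finset.univ : Finset ((Fin ((p-1)/2) → ZMod 2) × ZMod 2)).image
    (fun x => sig p (tau p x))).filter (fun h => h ∈ Wstar p)

lemma zero_mem_tau_image (hodd : Odd p) (hp3 : 3 ≤ p) :
    ∃ x, sig p (tau p x) = (0 : ℤ → ZMod 2) :=
  symm_mem_tau_image hodd hp3 (fun k => by simp) rfl (by funext k; simp [P1z])

lemma zig_mem_tau_image (hodd : Odd p) (hp3 : 3 ≤ p) :
    ∃ x, sig p (tau p x) = zig := by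
  refine symm_mem_tau_image hodd hp3 (zig_cp p) zig_zero ?_
  funext k
  show ((-k : ℤ) : ZMod 2) = (k : ZMod 2)
  push_cast
  linear_combination (-(Int.cast k : ZMod 2)) * two0

lemma fix0f_card (hp : p.Prime) (hodd : Odd p) (hp3 : 3 ≤ p) :
    (Fix0F p).card = 2 ^ ((p+1)/2) - 2 := by
  classical
  have hp0 := hp.pos
  set img := (Finset.univ : Finset ((Fin ((p-1)/2) → ZMod 2) × ZMod 2)).image
    (fun x => sig p (tau p x)) with himgdef
  have himg : img.card = 2 ^ ((p+1)/2) := by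
    rw [Finset.card_image_of_injective _ (fun a b hab => tau_inj hp3 (sig_inj hp0 hab)), Finset.card_univ]
    rw [Fintype.card_prod, Fintype.card_fun]
    have : (2:ℕ) ^ ((p-1)/2) * 2 = 2 ^ ((p-1)/2 + 1) := by ring
    simp only [Fintype.card_fin, ZMod.card]
    rw [this]
    congr 1
    omega
  have hset : Fix0F p = img \ {0, zig} := by
    ext g
    simp only [Fix0F, himgdef, Finset.mem_filter, Finset.mem_sdiff, Finset.mem_insert,
      Finset.mem_singleton, not_or]
    constructor
    · rintro ⟨hgi, hgw⟩
      refine ⟨hgi, ?_, ?_⟩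
      · rintro rfl; exact hgw.2.1 rfl
      · rintro rfl
        exact hgw.2.2.2 1 (one_dvd p) (by have := hp.one_lt; omega)
          ((wp_iff 1 zig).mpr (by exact_mod_cast zig_cp 1))
    · rintro ⟨hgi, hg0, hgz⟩
      refine ⟨hgi, ?_⟩
      obtain ⟨x, _, rfl⟩ := Finset.mem_image.mp hgi
      by_contra hnw
      rcases (char_not_wstar hp (sig_cp hp0 _) (sig_zero hp0 _)).mp hnw with h1 | h1
      · exact hg0 h1
      · exact hgz h1
  rw [hset, Finset.card_sdiff_of_subset]
  · rw [himg]
    congr 1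
    rw [Finset.card_insert_of_notMem (by simpa using zig_ne_zero.symm), Finset.card_singleton]
  · intro y hy
    simp only [Finset.mem_insert, Finset.mem_singleton] at hy
    rw [himgdef]
    rcases hy with rfl | rfl
    · obtain ⟨x, hx⟩ := zero_mem_tau_image hodd hp3
      exact Finset.mem_image.mpr ⟨x, Finset.mem_univ _, hx⟩
    · obtain ⟨x, hx⟩ := zig_mem_tau_image hodd hp3
      exact Finset.mem_image.mpr ⟨x, Finset.mem_univ _, hx⟩

open Classical in
/-- fixed points of the reflection indexed by `s` -/
noncomputable def FixF (p s : ℕ) : Finset (ℤ → ZMod 2) :=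
  (WSF p).filter (fun h => P1z h = Tm s h)

lemma fix0_eq (hp : p.Prime) (hodd : Odd p) (hp3 : 3 ≤ p) : FixF p 0 = Fix0F p := by
  classical
  have hp0 := hp.pos
  ext g
  simp only [FixF, Fix0F, Finset.mem_filter, Finset.mem_image, Finset.mem_univ, true_and,
    mem_wsf hp]
  constructor
  · rintro ⟨hgw, hsym⟩
    have h0 := wstar_zero hgw
    have hP := wstar_cp hgw
    rw [tm_zero h0] at hsym
    obtain ⟨x, hx⟩ := symm_mem_tau_image hodd hp3 hP h0 hsym
    exact ⟨⟨x, hx⟩, hgw⟩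
  · rintro ⟨⟨x, rfl⟩, hgw⟩
    refine ⟨hgw, ?_⟩
    rw [tm_zero (wstar_zero hgw)]
    exact sig_tau_symm hodd hp3 x

lemma fixf_card_eq (hp : p.Prime) (hodd : Odd p) (hp3 : 3 ≤ p) {s : ℕ} (hs : s < p) :
    (FixF p s).card = (FixF p 0).card := by
  classical
  have hp0 := hp.pos
  set m := ((p - s) * ((p+1)/2)) % p with hmdef
  have hmp : m < p := Nat.mod_lt _ hp0
  have h2e : 2 * ((p+1)/2) = p + 1 := by
    obtain ⟨d, hd⟩ := hodd; omega
  have key : (2 * m + s) ≡ 0 [MOD p] := by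
    have c1 : 2 * m ≡ 2 * ((p - s) * ((p+1)/2)) [MOD p] :=
      (Nat.mod_modEq _ p).mul_left 2
    have e1 : 2 * ((p - s) * ((p+1)/2)) = (p - s) * (p + 1) := by
      have e0 : 2 * ((p - s) * ((p+1)/2)) = (p - s) * (2 * ((p+1)/2)) := by ring
      rw [e0, h2e]
    have c2 : (p - s) * (p + 1) ≡ (p - s) * 1 [MOD p] :=
      Nat.ModEq.mul_left (p - s) (by
        have : p + 1 ≡ 0 + 1 [MOD p] := Nat.ModEq.add_right 1
          ((Nat.modEq_zero_iff_dvd).mpr dvd_rfl)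
        simpa using this)
    have c3 : 2 * m ≡ (p - s) [MOD p] := by
      calc 2 * m ≡ 2 * ((p - s) * ((p+1)/2)) [MOD p] := c1
        _ = (p - s) * (p + 1) := e1
        _ ≡ (p - s) * 1 [MOD p] := c2
        _ = p - s := by ring
    have c4 : 2 * m + s ≡ (p - s) + s [MOD p] := c3.add_right s
    have e2 : (p - s) + s = p := by omega
    rw [e2] at c4
    exact c4.trans ((Nat.modEq_zero_iff_dvd).mpr dvd_rfl)
  set mi := (p - m % p) % p with hmidef
  have hmip : mi < p := Nat.mod_lt _ hp0
  have hmi0 : (mi + m) % p = 0 := mod_helper hp0 m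
  have hmikey : mi + m ≡ 0 [MOD p] := by
    unfold Nat.ModEq; simpa using hmi0
  apply Finset.card_bij' (i := fun h _ => Tm mi h) (j := fun g _ => Tm m g)
  · -- maps FixF s into FixF 0
    intro g hg
    simp only [FixF, Finset.mem_filter, mem_wsf hp] at hg ⊢
    obtain ⟨hgw, hsym⟩ := hg
    have hP := wstar_cp hgw
    have h0 := wstar_zero hgw
    refine ⟨tm_mem_wstar hp hgw mi, ?_⟩
    rw [tm_zero (tm_zero_val mi g)]
    rw [p1_tm hP h0 (le_of_lt hmip), hsym, tm_add]
    refine tm_modeq hP hp0 ?_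
    -- p - mi + s ≡ mi [MOD p]
    have e3 : (p - mi + s) + 2 * (mi + m) = mi + (p + (2 * m + s)) := by omega
    calc p - mi + s ≡ (p - mi + s) + 2 * (mi + m) [MOD p] := by
          have := (hmikey.mul_left 2)
          simpa using ((Nat.ModEq.refl (p - mi + s)).add this.symm)
      _ = mi + (p + (2 * m + s)) := e3
      _ ≡ mi + (0 + 0) [MOD p] := by
          refine (Nat.ModEq.refl mi).add ?_
          exact ((Nat.modEq_zero_iff_dvd).mpr dvd_rfl).add key
      _ = mi := by omega
  · -- maps FixF 0 into FixF s
    intro h hh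
    simp only [FixF, Finset.mem_filter, mem_wsf hp] at hh ⊢
    obtain ⟨hhw, hsym⟩ := hh
    have hP := wstar_cp hhw
    have h0 := wstar_zero hhw
    rw [tm_zero h0] at hsym
    refine ⟨tm_mem_wstar hp hhw m, ?_⟩
    rw [p1_tm hP h0 (le_of_lt hmp), hsym, tm_add]
    refine tm_modeq hP hp0 ?_
    -- p - m ≡ s + m [MOD p]
    have e3 : (p - m) + (2 * m + s) = (s + m) + p := by omega
    calc p - m ≡ (p - m) + (2 * m + s) [MOD p] := by
          simpa using ((Nat.ModEq.refl (p - m)).add key.symm)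
      _ = (s + m) + p := e3
      _ ≡ (s + m) + 0 [MOD p] := (Nat.ModEq.refl (s + m)).add
          ((Nat.modEq_zero_iff_dvd).mpr dvd_rfl)
      _ = s + m := by omega
  · -- left inverse
    intro g hg
    simp only [FixF, Finset.mem_filter, mem_wsf hp] at hg
    have hP := wstar_cp hg.1
    have h0 := wstar_zero hg.1
    rw [tm_add]
    have e : (m + mi) % p = 0 := by rw [Nat.add_comm]; exact hmi0
    have : Tm (m + mi) g = Tm 0 g := tm_modeq hP hp0 (by unfold Nat.ModEq; simpa using e)
    rw [this, tm_zero h0]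
  · -- right inverse
    intro h hh
    simp only [FixF, Finset.mem_filter, mem_wsf hp] at hh
    have hP := wstar_cp hh.1
    have h0 := wstar_zero hh.1
    rw [tm_add]
    have : Tm (mi + m) h = Tm 0 h := tm_modeq hP hp0 (by
      unfold Nat.ModEq
      simpa using hmi0)
    rw [this, tm_zero h0]


open Classical in
noncomputable def SYF (p : ℕ) : Finset (ℤ → ZMod 2) := (WSF p).filter (fun h => IsSym p h)

open Classical in
noncomputable def NSF (p : ℕ) : Finset (ℤ → ZMod 2) := (WSF p).filter (fun h => ¬ IsSym p h)

lemma mem_syf (hp : p.Prime) {g : ℤ → ZMod 2} :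
    g ∈ SYF p ↔ g ∈ Wstar p ∧ IsSym p g := by
  classical
  simp only [SYF, Finset.mem_filter, mem_wsf hp]

lemma mem_nsf (hp : p.Prime) {g : ℤ → ZMod 2} :
    g ∈ NSF p ↔ g ∈ Wstar p ∧ ¬ IsSym p g := by
  classical
  simp only [NSF, Finset.mem_filter, mem_wsf hp]

lemma syf_eq_biUnion (hp : p.Prime) : SYF p = (Finset.range p).biUnion (fun s => FixF p s) := by
  classical
  ext g
  simp only [Finset.mem_biUnion, Finset.mem_range, mem_syf hp, FixF, Finset.mem_filter,
    mem_wsf hp]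
  constructor
  · rintro ⟨hgw, s, hsym⟩
    exact ⟨s % p, Nat.mod_lt _ hp.pos, hgw, by
      rw [hsym]; exact tm_mod (wstar_cp hgw) hp.pos s⟩
  · rintro ⟨s, _, hgw, hsym⟩
    exact ⟨hgw, s, hsym⟩

lemma syf_card (hp : p.Prime) (hodd : Odd p) (hp3 : 3 ≤ p) :
    (SYF p).card = p * (2 ^ ((p+1)/2) - 2) := by
  classical
  rw [syf_eq_biUnion hp, Finset.card_biUnion]
  · rw [Finset.sum_congr rfl (fun s hs => (fixf_card_eq hp hodd hp3
      (Finset.mem_range.mp hs)).trans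
      (by rw [fix0_eq hp hodd hp3, fix0f_card hp hodd hp3]))]
    rw [Finset.sum_const, Finset.card_range, smul_eq_mul]
  · intro s hs t ht hst
    simp only [Finset.mem_coe, Finset.mem_range, Function.onFun] at hs ht ⊢
    rw [Finset.disjoint_left]
    intro g hgs hgt
    simp only [FixF, Finset.mem_filter, mem_wsf hp] at hgs hgt
    obtain ⟨hgw, h1⟩ := hgs
    obtain ⟨_, h2⟩ := hgt
    exact hst (tm_inj hp (wstar_cp hgw) (wstar_zero hgw) (wstar_n1 hp hgw) hs ht
      (h1.symm.trans h2))

open Classical in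
lemma fiber_sym (hp : p.Prime) {h : ℤ → ZMod 2} (hh : h ∈ SYF p) :
    (SYF p).filter (fun g => VeechOrbit g = VeechOrbit h) = OrbF p h := by
  classical
  obtain ⟨hhw, hhs⟩ := (mem_syf hp).mp hh
  have hP := wstar_cp hhw
  have h0 := wstar_zero hhw
  ext g
  simp only [Finset.mem_filter]
  constructor
  · rintro ⟨_, hvo⟩
    have : g ∈ VeechOrbit h := by
      rw [← hvo]; exact Relation.ReflTransGen.refl
    rw [veech_eq_orb hP h0 hp.pos, ← orbF_coe hP h0 hp.pos, Finset.mem_coe] at this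
    exact this
  · intro hg
    have hgo : g ∈ Orb p h := by
      rw [← orbF_coe hP h0 hp.pos]; exact hg
    obtain ⟨hgw, hgs⟩ := sym_transfer hp hhw hhs hgo
    exact ⟨(mem_syf hp).mpr ⟨hgw, hgs⟩, orbit_eq_of_mem_orb hp hP h0 hgo⟩

open Classical in
lemma fiber_nonsym (hp : p.Prime) {h : ℤ → ZMod 2} (hh : h ∈ NSF p) :
    (NSF p).filter (fun g => VeechOrbit g = VeechOrbit h) = OrbF p h := by
  classical
  obtain ⟨hhw, hhs⟩ := (mem_nsf hp).mp hh
  have hP := wstar_cp hhw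
  have h0 := wstar_zero hhw
  ext g
  simp only [Finset.mem_filter]
  constructor
  · rintro ⟨_, hvo⟩
    have : g ∈ VeechOrbit h := by
      rw [← hvo]; exact Relation.ReflTransGen.refl
    rw [veech_eq_orb hP h0 hp.pos, ← orbF_coe hP h0 hp.pos, Finset.mem_coe] at this
    exact this
  · intro hg
    have hgo : g ∈ Orb p h := by
      rw [← orbF_coe hP h0 hp.pos]; exact hg
    obtain ⟨hgw, hgs⟩ := nonsym_transfer hp hhw hhs hgo
    exact ⟨(mem_nsf hp).mpr ⟨hgw, hgs⟩, orbit_eq_of_mem_orb hp hP h0 hgo⟩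

open Classical in
lemma syf_count (hp : p.Prime) :
    (SYF p).card = ((SYF p).image VeechOrbit).card * p := by
  classical
  rw [Finset.card_eq_sum_card_image VeechOrbit (SYF p)]
  have hsum : ∀ O ∈ (SYF p).image VeechOrbit,
      ((SYF p).filter (fun a => VeechOrbit a = O)).card = p := by
    intro O hO
    obtain ⟨h, hh, rfl⟩ := Finset.mem_image.mp hO
    rw [Finset.filter_congr_decidable, fiber_sym hp hh]
    obtain ⟨hhw, hhs⟩ := (mem_syf hp).mp hh
    exact orbF_card_sym hp (wstar_cp hhw) (wstar_zero hhw) (wstar_n1 hp hhw) hhs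
  rw [Finset.sum_congr rfl hsum, Finset.sum_const, smul_eq_mul]

open Classical in
lemma nsf_count (hp : p.Prime) :
    (NSF p).card = ((NSF p).image VeechOrbit).card * (2 * p) := by
  classical
  rw [Finset.card_eq_sum_card_image VeechOrbit (NSF p)]
  have hsum : ∀ O ∈ (NSF p).image VeechOrbit,
      ((NSF p).filter (fun a => VeechOrbit a = O)).card = 2 * p := by
    intro O hO
    obtain ⟨h, hh, rfl⟩ := Finset.mem_image.mp hO
    rw [Finset.filter_congr_decidable, fiber_nonsym hp hh]
    obtain ⟨hhw, hhs⟩ := (mem_nsf hp).mp hh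
    exact orbF_card_nonsym hp (wstar_cp hhw) (wstar_zero hhw) (wstar_n1 hp hhw) hhs
  rw [Finset.sum_congr rfl hsum, Finset.sum_const, smul_eq_mul]

open Classical in
lemma qp_eq (hp : p.Prime) :
    {O : Set (ℤ → ZMod 2) | (∃ h ∈ Wstar p, O = VeechOrbit h) ∧ Nat.card O = p}
      = ((SYF p).image VeechOrbit : Finset (Set (ℤ → ZMod 2))) := by
  classical
  ext O
  simp only [Set.mem_setOf_eq, Finset.coe_image, Set.mem_image, Finset.mem_coe]
  constructor
  · rintro ⟨⟨h, hh, rfl⟩, hcard⟩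
    have hP := wstar_cp hh
    have h0 := wstar_zero hh
    have hn1 := wstar_n1 hp hh
    by_cases hsym : IsSym p h
    · exact ⟨h, (mem_syf hp).mpr ⟨hh, hsym⟩, rfl⟩
    · exfalso
      rw [nat_card_orbit hP h0 hp.pos, orbF_card_nonsym hp hP h0 hn1 hsym] at hcard
      have := hp.pos
      omega
  · rintro ⟨h, hh, rfl⟩
    obtain ⟨hhw, hhs⟩ := (mem_syf hp).mp hh
    refine ⟨⟨h, hhw, rfl⟩, ?_⟩
    rw [nat_card_orbit (wstar_cp hhw) (wstar_zero hhw) hp.pos]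
    exact orbF_card_sym hp (wstar_cp hhw) (wstar_zero hhw) (wstar_n1 hp hhw) hhs

open Classical in
lemma q2p_eq (hp : p.Prime) :
    {O : Set (ℤ → ZMod 2) | (∃ h ∈ Wstar p, O = VeechOrbit h) ∧ Nat.card O = 2 * p}
      = ((NSF p).image VeechOrbit : Finset (Set (ℤ → ZMod 2))) := by
  classical
  ext O
  simp only [Set.mem_setOf_eq, Finset.coe_image, Set.mem_image, Finset.mem_coe]
  constructor
  · rintro ⟨⟨h, hh, rfl⟩, hcard⟩
    have hP := wstar_cp hh
    have h0 := wstar_zero hh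
    have hn1 := wstar_n1 hp hh
    by_cases hsym : IsSym p h
    · exfalso
      rw [nat_card_orbit hP h0 hp.pos, orbF_card_sym hp hP h0 hn1 hsym] at hcard
      have := hp.pos
      omega
    · exact ⟨h, (mem_nsf hp).mpr ⟨hh, hsym⟩, rfl⟩
  · rintro ⟨h, hh, rfl⟩
    obtain ⟨hhw, hhs⟩ := (mem_nsf hp).mp hh
    refine ⟨⟨h, hhw, rfl⟩, ?_⟩
    rw [nat_card_orbit (wstar_cp hhw) (wstar_zero hhw) hp.pos]
    exact orbF_card_nonsym hp (wstar_cp hhw) (wstar_zero hhw) (wstar_n1 hp hhw) hhs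

lemma nsf_eq (hp : p.Prime) : NSF p = WSF p \ SYF p := by
  classical
  ext g
  simp only [mem_nsf hp, Finset.mem_sdiff, mem_syf hp, mem_wsf hp]
  tauto

lemma split_card (hp : p.Prime) : (SYF p).card + (NSF p).card = (WSF p).card := by
  classical
  rw [nsf_eq hp, Finset.card_sdiff_of_subset]
  · have hle : (SYF p).card ≤ (WSF p).card :=
      Finset.card_le_card (Finset.filter_subset _ _)
    omega
  · exact Finset.filter_subset _ _

end S19

open S19

theorem stmt19 (p : ℕ) (hp : p.Prime) (hodd : Odd p) :
    Nat.card {O : Set (ℤ → ZMod 2) |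
        (∃ h ∈ Wstar p, O = VeechOrbit h) ∧ Nat.card O = p}
      = 2 ^ ((p + 1) / 2) - 2 ∧
    (Nat.card {O : Set (ℤ → ZMod 2) |
        (∃ h ∈ Wstar p, O = VeechOrbit h) ∧ Nat.card O = 2 * p} : ℤ)
      = (2 ^ (p - 1) - 1 : ℤ) / p - 2 ^ ((p - 1) / 2) + 1 ∧
    (p : ℤ) ∣ 2 ^ (p - 1) - 1 := by
  classical
  have hp3 : 3 ≤ p := by
    rcases hp.eq_two_or_odd with h2 | _
    · exfalso; rw [h2] at hodd; exact (by decide : ¬ Odd 2) hodd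
    · have := hp.two_le
      rcases Nat.eq_or_lt_of_le this with h2 | h2
      · exfalso; rw [← h2] at hodd; exact (by decide : ¬ Odd 2) hodd
      · omega
  have hp0 := hp.pos
  -- Fermat
  haveI : Fact p.Prime := ⟨hp⟩
  have h2ne : (2 : ZMod p) ≠ 0 := by
    intro hz
    have : (p : ℕ) ∣ 2 := by
      have := (ZMod.natCast_eq_zero_iff 2 p).mp (by exact_mod_cast hz)
      exact this
    have := Nat.le_of_dvd (by norm_num) this
    omega
  have hferm : (2 : ZMod p) ^ (p - 1) = 1 := ZMod.pow_card_sub_one_eq_one h2ne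
  have hdvd : (p : ℤ) ∣ 2 ^ (p - 1) - 1 := by
    rw [← ZMod.intCast_zmod_eq_zero_iff_dvd]
    push_cast
    rw [hferm]
    ring
  -- counts
  set N1 := ((SYF p).image VeechOrbit).card with hN1
  set N2 := ((NSF p).image VeechOrbit).card with hN2
  have hcard1 : Nat.card {O : Set (ℤ → ZMod 2) |
      (∃ h ∈ Wstar p, O = VeechOrbit h) ∧ Nat.card O = p} = N1 := by
    rw [show {O : Set (ℤ → ZMod 2) | (∃ h ∈ Wstar p, O = VeechOrbit h) ∧ Nat.card O = p}
      = ((SYF p).image VeechOrbit : Finset (Set (ℤ → ZMod 2))) from qp_eq hp]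
    rw [Nat.card_coe_set_eq, Set.ncard_coe_finset]
  have hcard2 : Nat.card {O : Set (ℤ → ZMod 2) |
      (∃ h ∈ Wstar p, O = VeechOrbit h) ∧ Nat.card O = 2 * p} = N2 := by
    rw [show {O : Set (ℤ → ZMod 2) | (∃ h ∈ Wstar p, O = VeechOrbit h) ∧ Nat.card O = 2 * p}
      = ((NSF p).image VeechOrbit : Finset (Set (ℤ → ZMod 2))) from q2p_eq hp]
    rw [Nat.card_coe_set_eq, Set.ncard_coe_finset]
  have hN1val : N1 = 2 ^ ((p+1)/2) - 2 := by
    have h1 : N1 * p = (2 ^ ((p+1)/2) - 2) * p := by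
      rw [← syf_count hp, syf_card hp hodd hp3]; ring
    exact Nat.eq_of_mul_eq_mul_right hp0 h1
  refine ⟨by rw [hcard1, hN1val], ?_, hdvd⟩
  rw [hcard2]
  -- the big equation
  have hsplit : p * (2 ^ ((p+1)/2) - 2) + N2 * (2 * p) = 2 ^ p - 2 := by
    rw [← syf_card hp hodd hp3, ← nsf_count hp, split_card hp, wsf_card hp]
  -- cast to ℤ
  have h2le1 : 2 ≤ 2 ^ ((p+1)/2) := by
    have : (1:ℕ) ≤ (p+1)/2 := by omega
    calc (2:ℕ) = 2^1 := by norm_num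
      _ ≤ 2 ^ ((p+1)/2) := Nat.pow_le_pow_right (by norm_num) this
  have h2le2 : 2 ≤ 2 ^ p := by
    calc (2:ℕ) = 2^1 := by norm_num
      _ ≤ 2 ^ p := Nat.pow_le_pow_right (by norm_num) (by omega)
  have hsplitZ : (p:ℤ) * (2 ^ ((p+1)/2) - 2) + (N2:ℤ) * (2 * p) = 2 ^ p - 2 := by
    have := congrArg (fun n : ℕ => (n : ℤ)) hsplit
    push_cast [Nat.cast_sub h2le1, Nat.cast_sub h2le2] at this
    push_cast
    linarith
  -- rewrite powers
  have hpow1 : (2:ℤ) ^ p = 2 * 2 ^ (p - 1) := by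
    rw [← pow_succ']
    congr 1
    omega
  have hpow2 : (2:ℤ) ^ ((p+1)/2) = 2 * 2 ^ ((p-1)/2) := by
    rw [← pow_succ']
    congr 1
    omega
  have hkey : (p:ℤ) * (N2:ℤ) = (2 ^ (p-1) - 1) - (p:ℤ) * 2 ^ ((p-1)/2) + (p:ℤ) := by
    have h2 : (2:ℤ) * ((p:ℤ) * (N2:ℤ))
        = 2 * ((2 ^ (p-1) - 1) - (p:ℤ) * 2 ^ ((p-1)/2) + (p:ℤ)) := by
      rw [hpow1, hpow2] at hsplitZ
      linarith
    linarith
  have hpne : (p:ℤ) ≠ 0 := by exact_mod_cast hp0.ne'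
  apply mul_left_cancel₀ hpne
  rw [hkey, mul_add, mul_sub, Int.mul_ediv_cancel' hdvd, mul_one]
end
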